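/- arXiv:1507.07910 — 4 statements merged into one kernel-verified Lean document; each statement's English description precedes it below -/
import Mathlib

section
/- Fix ℓ ∈ ℤ and an environment e. If ‖f_{iℓ}(e)‖ = 1 for some i < ℓ, then ‖f_{iℓ}(e)‖ = 1 for every i < ℓ; similarly, if ‖f_{iℓ}(e)‖ = 1 for some i > ℓ, then ‖f_{iℓ}(e)‖ = 1 for every i > ℓ. Suppose in addition that the Markov chain G_n on {1,…,m} with transition matrix Q is irreducible. If P^e_{αi}(τ_ℓ < ∞) = 1 for a.e. e for some α ∈ {1,…,m} and some i < ℓ, then P^e_{αi}(τ_ℓ < ∞) = 1 for a.e. e for every α ∈ {1,…,m} and every i < ℓ; and if P^e_{αi}(τ_ℓ < ∞) = 1 for a.e. e for some α and some i > ℓ, then P^e_{αi}(τ_ℓ < ∞) = 1 for a.e. e for every α ∈ {1,…,m} and every i > ℓ. -/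
open MeasureTheory Filter Matrix
open scoped ENNReal Topology

namespace Parrondo

/-- One-step transition probability of the regime-switching random walk:
`P_{αi,βj} = Q_{αβ} P^{(β)}_{ij}` with `P^{(β)}_{i,i+1} = p^{(β)}_i`,
`P^{(β)}_{i,i-1} = 1 - p^{(β)}_i`. -/
noncomputable def step {ι : Type*} (Q : Matrix ι ι ℝ) (p : ι → ℤ → ℝ) (s s' : ι × ℤ) : ℝ :=
  Q s.1 s'.1 *
    (if s'.2 = s.2 + 1 then p s'.1 s.2
     else if s'.2 = s.2 - 1 then 1 - p s'.1 s.2 else 0)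

/-- `μ α i` is the quenched law of the regime-switching walk `(G_n, X_n)` started at `(α, i)`,
characterized by its values on cylinder sets. -/
def IsQuenchedLaw {ι : Type*} [DecidableEq ι] [MeasurableSpace ι]
    (Q : Matrix ι ι ℝ) (p : ι → ℤ → ℝ) (μ : ι → ℤ → Measure (ℕ → ι × ℤ)) : Prop :=
  ∀ (α : ι) (i : ℤ),
    IsProbabilityMeasure (μ α i) ∧
    ∀ (n : ℕ) (traj : ℕ → ι × ℤ),
      μ α i {ω | ∀ k ≤ n, ω k = traj k} =
        (if traj 0 = (α, i) then 1 else 0) *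
          ENNReal.ofReal (∏ k ∈ Finset.range n, step Q p (traj k) (traj (k + 1)))

/-- The event `{τ_ℓ < ∞}` where `τ_ℓ = inf {n ≥ 1 : X_n = ℓ}`. -/
def hitEvent {ι : Type*} (ℓ : ℤ) : Set (ℕ → ι × ℤ) := {ω | ∃ n : ℕ, 1 ≤ n ∧ (ω n).2 = ℓ}

/-- The event `{τ_ℓ < ∞, G_{τ_ℓ} = β}`. -/
def hitRegimeEvent {ι : Type*} (ℓ : ℤ) (β : ι) : Set (ℕ → ι × ℤ) :=
  {ω | ∃ n : ℕ, 1 ≤ n ∧ (ω n).2 = ℓ ∧ (ω n).1 = β ∧ ∀ k, 1 ≤ k → k < n → (ω k).2 ≠ ℓ}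

/-- The event `{X_n ≤ ℓ infinitely often}`. -/
def belowIO {ι : Type*} (ℓ : ℤ) : Set (ℕ → ι × ℤ) := {ω | ∃ᶠ n in atTop, (ω n).2 ≤ ℓ}

/-- The event `{lim_n X_n = +∞}`. -/
def driftTop {ι : Type*} : Set (ℕ → ι × ℤ) := {ω | Tendsto (fun n => (ω n).2) atTop atTop}

/-- The event `{lim_n X_n = -∞}`. -/
def driftBot {ι : Type*} : Set (ℕ → ι × ℤ) := {ω | Tendsto (fun n => (ω n).2) atTop atBot}

/-- The event `{liminf_n X_n = -∞ and limsup_n X_n = +∞}`. -/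
def oscillate {ι : Type*} : Set (ℕ → ι × ℤ) :=
  {ω | (∀ M : ℤ, ∃ᶠ n in atTop, (ω n).2 < M) ∧ ∀ M : ℤ, ∃ᶠ n in atTop, M < (ω n).2}

/-- `‖f_{iℓ}‖ = max_α P_{αi}(τ_ℓ < ∞)`. -/
noncomputable def fnorm {ι : Type*} [Fintype ι] [MeasurableSpace ι]
    (μ : ι → ℤ → Measure (ℕ → ι × ℤ)) (i ℓ : ℤ) : ℝ :=
  ⨆ α : ι, (μ α i (hitEvent ℓ)).toReal

/-- One step of the chain `(G_n, X_n)` has positive probability (the probabilities `p` being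
in `(0,1)`, this only depends on `Q`). -/
def StepPos {ι : Type*} (Q : Matrix ι ι ℝ) (s s' : ι × ℤ) : Prop :=
  0 < Q s.1 s'.1 ∧ (s'.2 = s.2 + 1 ∨ s'.2 = s.2 - 1)

/-- Irreducibility of the Markov chain `(G_n, X_n)`. -/
def ChainIrreducible {ι : Type*} (Q : Matrix ι ι ℝ) : Prop :=
  ∀ s s' : ι × ℤ, ∃ (n : ℕ) (c : ℕ → ι × ℤ),
    c 0 = s ∧ c n = s' ∧ ∀ k < n, StepPos Q (c k) (c (k + 1))

/-- Irreducibility of the Markov chain `G_n` with transition matrix `Q`. -/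
def MatIrreducible {ι : Type*} (Q : Matrix ι ι ℝ) : Prop :=
  ∀ α β : ι, ∃ (n : ℕ) (g : ℕ → ι), g 0 = α ∧ g n = β ∧ ∀ k < n, 0 < Q (g k) (g (k + 1))

/-- One-step transition probability of a nearest-neighbour random walk on `ℤ`. -/
noncomputable def stepRW (p : ℤ → ℝ) (i j : ℤ) : ℝ :=
  if j = i + 1 then p i else if j = i - 1 then 1 - p i else 0

/-- `μ i` is the quenched law of the nearest-neighbour walk on `ℤ` started at `i`. -/
def IsRWLaw (p : ℤ → ℝ) (μ : ℤ → Measure (ℕ → ℤ)) : Prop :=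
  ∀ i : ℤ,
    IsProbabilityMeasure (μ i) ∧
    ∀ (n : ℕ) (traj : ℕ → ℤ),
      μ i {ω | ∀ k ≤ n, ω k = traj k} =
        (if traj 0 = i then 1 else 0) *
          ENNReal.ofReal (∏ k ∈ Finset.range n, stepRW p (traj k) (traj (k + 1)))

def driftTopZ : Set (ℕ → ℤ) := {ω | Tendsto ω atTop atTop}

def driftBotZ : Set (ℕ → ℤ) := {ω | Tendsto ω atTop atBot}

def oscillateZ : Set (ℕ → ℤ) :=
  {ω | (∀ M : ℤ, ∃ᶠ n in atTop, ω n < M) ∧ ∀ M : ℤ, ∃ᶠ n in atTop, M < ω n}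

/-- A norm on matrices (all norms being equivalent, the choice is irrelevant). -/
noncomputable def matNorm {ι : Type*} [Fintype ι] (B : Matrix ι ι ℝ) : ℝ :=
  ⨆ x : ι × ι, |B x.1 x.2|

/-- `prodA A n = A_n ⋯ A_1`. -/
def prodA {ι : Type*} [Fintype ι] [DecidableEq ι]
    (A : ℤ → Matrix ι ι ℝ) : ℕ → Matrix ι ι ℝ
  | 0 => 1
  | n + 1 => A ((n : ℤ) + 1) * prodA A n

/-- The Lyapunov exponent `lim_n n⁻¹ log ‖B_n v‖` (as a `limsup`, in `EReal`). -/
noncomputable def lyap {ι : Type*} [Fintype ι] (B : ℕ → Matrix ι ι ℝ) (v : ι → ℝ) : EReal :=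
  Filter.limsup (fun n : ℕ => ((Real.log ‖B n *ᵥ v‖ / n : ℝ) : EReal)) Filter.atTop

/-- `V̄_0 = {v : lim_n n⁻¹ log ‖B_n v‖ ≤ 0}`. -/
def V0 {ι : Type*} [Fintype ι] (B : ℕ → Matrix ι ι ℝ) : Set (ι → ℝ) := {v | lyap B v ≤ 0}

/-- `V̄_{0-} = {v : lim_n n⁻¹ log ‖B_n v‖ < 0}`. -/
def V0minus {ι : Type*} [Fintype ι] (B : ℕ → Matrix ι ι ℝ) : Set (ι → ℝ) := {v | lyap B v < 0}

/-- `S` is a linear subspace of dimension `d`. -/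
def HasDim {ι : Type*} [Fintype ι] (S : Set (ι → ℝ)) (d : ℕ) : Prop :=
  ∃ W : Submodule ℝ (ι → ℝ), (W : Set (ι → ℝ)) = S ∧ Module.finrank ℝ W = d

/-- The `2m × 2m` matrix `A_i = [[M_i⁻¹, -σ_i],[I, 0]]` with `M_i = QΔ_i`, `N_i = Q(I - Δ_i)`,
`σ_i = M_i⁻¹ N_i`, where `p` lists the diagonal entries of `Δ_i`. -/
noncomputable def Afull {m : ℕ} (Q : Matrix (Fin m) (Fin m) ℝ) (p : Fin m → ℝ) :
    Matrix (Fin m ⊕ Fin m) (Fin m ⊕ Fin m) ℝ :=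
  Matrix.fromBlocks (Q * Matrix.diagonal p)⁻¹
    (-((Q * Matrix.diagonal p)⁻¹ * (Q * (1 - Matrix.diagonal p)))) 1 0

/-- `M̌_i = π⁽¹⁾Δ_i⁽¹⁾ + π⁽²⁾Δ_i⁽²⁾Θ`. -/
noncomputable def Mcheck {r s : ℕ} (π : Matrix (Fin r) (Fin r ⊕ Fin s) ℝ)
    (Θ : Matrix (Fin s) (Fin r) ℝ) (p : Fin r ⊕ Fin s → ℝ) : Matrix (Fin r) (Fin r) ℝ :=
  (Matrix.of fun a c => π a (Sum.inl c)) * Matrix.diagonal (fun c => p (Sum.inl c)) +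
    (Matrix.of fun a b => π a (Sum.inr b)) * Matrix.diagonal (fun b => p (Sum.inr b)) * Θ

/-- `Ň_i = π⁽¹⁾(I - Δ_i⁽¹⁾) + π⁽²⁾(I - Δ_i⁽²⁾)Θ`. -/
noncomputable def Ncheck {r s : ℕ} (π : Matrix (Fin r) (Fin r ⊕ Fin s) ℝ)
    (Θ : Matrix (Fin s) (Fin r) ℝ) (p : Fin r ⊕ Fin s → ℝ) : Matrix (Fin r) (Fin r) ℝ :=
  (Matrix.of fun a c => π a (Sum.inl c)) * (1 - Matrix.diagonal (fun c => p (Sum.inl c))) +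
    (Matrix.of fun a b => π a (Sum.inr b)) * (1 - Matrix.diagonal (fun b => p (Sum.inr b))) * Θ

/-- The `2r × 2r` matrix `Ǎ_i = [[M̌_i⁻¹, -σ̌_i],[I, 0]]` with `σ̌_i = M̌_i⁻¹ Ň_i`. -/
noncomputable def Acheck {r s : ℕ} (π : Matrix (Fin r) (Fin r ⊕ Fin s) ℝ)
    (Θ : Matrix (Fin s) (Fin r) ℝ) (p : Fin r ⊕ Fin s → ℝ) :
    Matrix (Fin r ⊕ Fin r) (Fin r ⊕ Fin r) ℝ :=
  Matrix.fromBlocks (Mcheck π Θ p)⁻¹ (-((Mcheck π Θ p)⁻¹ * Ncheck π Θ p)) 1 0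

/-- The event `{𝒩_ℓ ≥ k} = {τ_ℓ^{(k)} < ∞}`: there are at least `k` visits of `X` to `ℓ`
(at times `≥ 1`). -/
def visitsAtLeast {ι : Type*} (ℓ : ℤ) (k : ℕ) : Set (ℕ → ι × ℤ) :=
  {ω | ∃ s : Fin k → ℕ, StrictMono s ∧ ∀ j, 1 ≤ s j ∧ (ω (s j)).2 = ℓ}

/-- The event `{τ_ℓ^{(k+1)} < ∞, G_{τ_ℓ^{(k+1)}} = β}`: the walk visits `ℓ` at least `k+1` times
and the regime at the `(k+1)`-th visit is `β`. -/
def kthVisitInRegime {ι : Type*} (ℓ : ℤ) (k : ℕ) (β : ι) : Set (ℕ → ι × ℤ) :=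
  {ω | ∃ s : Fin (k + 1) → ℕ, StrictMono s ∧ (∀ j, 1 ≤ s j ∧ (ω (s j)).2 = ℓ) ∧
    (ω (s (Fin.last k))).1 = β ∧
    ∀ n : ℕ, 1 ≤ n → n ≤ s (Fin.last k) → (ω n).2 = ℓ → ∃ j, s j = n}

/-- The shift on real sequences. -/
def shiftSeq : (ℕ → ℝ) → (ℕ → ℝ) := fun x n => x (n + 1)

/-!
Write `h(α, i) = P_{αi}(τ_ℓ < ∞)`. It is the increasing limit of the `N`-step hitting
probabilities, hence a fixed point of the one-step recursion
`h(α, i) = ∑_β Q_{αβ} (p^{(β)}_i h̃(β, i + 1) + q^{(β)}_i h̃(β, i - 1))`, where `h̃ = h` off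
level `ℓ` and `h̃ = 1` on it. As `h ≤ 1` and the weights are positive, `h(α, i) = 1` forces
`h = 1` at every state the chain can step to, except on level `ℓ` itself. Moving one level at a
time gives the first part.

For the second part, irreducibility spreads `h = 1` from two adjacent levels in a common regime to
the whole half-space; one level alone would not do for periodic `Q`. The second level comes from
stationarity: a step down from `(α, i)` gives `h = 1` a.s. at `(β, i - 1)`; shifting the
environment by `T` turns this into a.s. hitting of `ℓ + 1` from `(β, i)`, and on the way up the
walk must hit `ℓ`. The half-space above `ℓ` is the mirror image (`p ↦ 1 - p(-·)`), except that
the stationarity step then pushes an a.s. statement forward along `T`, which uses measurability of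
`h` in the environment.
-/

lemma eq_one_of_convexComb_eq_one {p a b : ℝ} (hp : p ∈ Set.Ioo 0 1) (ha : a ≤ 1) (hb : b ≤ 1)
    (h : p * a + (1 - p) * b = 1) : a = 1 ∧ b = 1 := by
  obtain ⟨hp0, hp1⟩ := hp
  constructor <;> nlinarith

lemma ciSup_eq_one_iff {ι : Type*} [Finite ι] {g : ι → ℝ} (hg : ∀ i, g i ≤ 1) :
    (⨆ i, g i) = 1 ↔ ∃ i, g i = 1 := by
  constructor
  · intro h
    rcases isEmpty_or_nonempty ι with _ | _
    · simp at h
    · obtain ⟨i, hi⟩ := exists_eq_ciSup_of_finite (f := g)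
      exact ⟨i, hi.trans h⟩
  · rintro ⟨i, hi⟩
    have : Nonempty ι := ⟨i⟩
    exact le_antisymm (ciSup_le hg) (hi ▸ le_ciSup (Set.finite_range g).bddAbove i)

theorem _root_.MeasureTheory.MeasurePreserving.ae_comp_iff {α β : Type*} [MeasurableSpace α]
    [MeasurableSpace β] {μa : Measure α} {μb : Measure β} {T : α → β}
    (hT : MeasurePreserving T μa μb) {q : β → Prop} (hq : MeasurableSet {y | q y}) :
    (∀ᵐ x ∂μa, q (T x)) ↔ ∀ᵐ y ∂μb, q y := by
  rw [← ae_map_iff hT.aemeasurable hq, hT.map_eq]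

section HittingProbability

variable {ι : Type*} {Q : Matrix ι ι ℝ} {f : ι → ℤ → ℝ} {ℓ : ℤ}

def withOneAt (ℓ : ℤ) (u : ι → ℤ → ℝ) (β : ι) (j : ℤ) : ℝ := if j = ℓ then 1 else u β j

lemma withOneAt_monotone : Monotone (withOneAt (ι := ι) ℓ) := by
  intro u v h β j
  unfold withOneAt
  split_ifs
  exacts [le_rfl, h β j]

lemma mapsTo_withOneAt : Set.MapsTo (withOneAt (ι := ι) ℓ) (Set.Icc 0 1) (Set.Icc 0 1) := by
  intro u ⟨h0, h1⟩
  constructor <;> intro β j <;> unfold withOneAt <;> split_ifs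
  exacts [zero_le_one, h0 β j, le_rfl, h1 β j]

lemma continuous_withOneAt : Continuous (withOneAt (ι := ι) ℓ) :=
  continuous_pi fun β => continuous_pi fun j => by
    unfold withOneAt
    split_ifs
    exacts [continuous_const, by fun_prop]

def reflect (f : ι → ℤ → ℝ) (α : ι) (k : ℤ) : ℝ := 1 - f α (-k)

lemma reflect_mem_Icc (hf : ∀ α k, f α k ∈ Set.Icc (0 : ℝ) 1) (α : ι) (k : ℤ) :
    reflect f α k ∈ Set.Icc (0 : ℝ) 1 :=
  ⟨sub_nonneg.2 (hf α (-k)).2, sub_le_self _ (hf α (-k)).1⟩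

lemma reflect_mem_Ioo (hf : ∀ α k, f α k ∈ Set.Ioo (0 : ℝ) 1) (α : ι) (k : ℤ) :
    reflect f α k ∈ Set.Ioo (0 : ℝ) 1 :=
  ⟨sub_pos.2 (hf α (-k)).2, sub_lt_self _ (hf α (-k)).1⟩

variable [Fintype ι]

/-- `transOp Q f v α i = E_{αi} v(G_1, X_1)`. -/
def transOp (Q : Matrix ι ι ℝ) (f : ι → ℤ → ℝ) (v : ι → ℤ → ℝ) (α : ι) (i : ℤ) : ℝ :=
  ∑ β, Q α β * (f β i * v β (i + 1) + (1 - f β i) * v β (i - 1))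

def hitOp (Q : Matrix ι ι ℝ) (f : ι → ℤ → ℝ) (ℓ : ℤ) (u : ι → ℤ → ℝ) : ι → ℤ → ℝ :=
  transOp Q f (withOneAt ℓ u)

/-- `hitProbWithin Q f ℓ N α i = P_{αi}(τ_ℓ ≤ N)`, see `IsQuenchedLaw.measure_hitBy`. -/
def hitProbWithin (Q : Matrix ι ι ℝ) (f : ι → ℤ → ℝ) (ℓ : ℤ) (N : ℕ) : ι → ℤ → ℝ :=
  (hitOp Q f ℓ)^[N] 0

/-- `hitProb Q f ℓ α i = P_{αi}(τ_ℓ < ∞)`, defined without reference to a quenched law;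
`IsQuenchedLaw.measure_hitEvent` identifies the two. -/
noncomputable def hitProb (Q : Matrix ι ι ℝ) (f : ι → ℤ → ℝ) (ℓ : ℤ) (α : ι) (i : ℤ) : ℝ :=
  ⨆ N, hitProbWithin Q f ℓ N α i

lemma continuous_transOp (α : ι) (i : ℤ) : Continuous fun v => transOp Q f v α i := by
  unfold transOp
  fun_prop

lemma continuous_hitOp : Continuous (hitOp Q f ℓ) :=
  continuous_pi fun α => continuous_pi fun i =>
    (continuous_transOp α i).comp continuous_withOneAt

lemma hitOp_reflect (u : ι → ℤ → ℝ) :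
    hitOp Q (reflect f) (-ℓ) (fun β j => u β (-j)) = fun α i => hitOp Q f ℓ u α (-i) := by
  ext α i
  refine Finset.sum_congr rfl fun β _ => ?_
  simp only [withOneAt, reflect]
  split_ifs <;> first | omega | ring_nf

lemma hitProb_reflect (α : ι) (i : ℤ) : hitProb Q (reflect f) (-ℓ) α i = hitProb Q f ℓ α (-i) := by
  have h : ∀ N, hitProbWithin Q (reflect f) (-ℓ) N = fun α i => hitProbWithin Q f ℓ N α (-i) := by
    intro N
    induction N with
    | zero => rfl
    | succ N ih =>
      simp only [hitProbWithin, Function.iterate_succ_apply'] at ih ⊢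
      rw [ih, hitOp_reflect]
  simp only [hitProb, h]

lemma hitOp_translate (c : ℤ) (u : ι → ℤ → ℝ) :
    hitOp Q (fun α k => f α (k + c)) ℓ (fun β j => u β (j + c)) =
      fun α i => hitOp Q f (ℓ + c) u α (i + c) := by
  ext α i
  refine Finset.sum_congr rfl fun β _ => ?_
  simp only [withOneAt]
  split_ifs <;> first | omega | ring_nf

lemma hitProb_translate (c : ℤ) (α : ι) (i : ℤ) :
    hitProb Q (fun α k => f α (k + c)) ℓ α i = hitProb Q f (ℓ + c) α (i + c) := by
  have h : ∀ N, hitProbWithin Q (fun α k => f α (k + c)) ℓ N =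
      fun α i => hitProbWithin Q f (ℓ + c) N α (i + c) := by
    intro N
    induction N with
    | zero => rfl
    | succ N ih =>
      simp only [hitProbWithin, Function.iterate_succ_apply'] at ih ⊢
      rw [ih, hitOp_translate]
  simp only [hitProb, h]

variable [DecidableEq ι]

lemma exists_pos_of_mem_rowStochastic (hQ : Q ∈ rowStochastic ℝ ι) (α : ι) : ∃ β, 0 < Q α β := by
  by_contra! h
  have := sum_row_of_mem_rowStochastic hQ α
  rw [Finset.sum_eq_zero fun β _ => (h β).antisymm (nonneg_of_mem_rowStochastic hQ)] at this
  exact zero_ne_one this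

lemma step_nonneg (hQ : Q ∈ rowStochastic ℝ ι) (hf : ∀ α k, f α k ∈ Set.Icc (0 : ℝ) 1)
    (s s' : ι × ℤ) : 0 ≤ step Q f s s' := by
  refine mul_nonneg (nonneg_of_mem_rowStochastic hQ) ?_
  split_ifs
  exacts [(hf _ _).1, sub_nonneg.2 (hf _ _).2, le_rfl]

lemma transOp_indicator (s : ι × ℤ) (c : ℝ) (α : ι) (i : ℤ) :
    transOp Q f (fun β j => if s = (β, j) then c else 0) α i = step Q f (α, i) s * c := by
  obtain ⟨γ, k⟩ := s
  rw [transOp, Finset.sum_eq_single γ (fun β _ hβ => by simp [Ne.symm hβ]) (by simp)]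
  simp only [step, Prod.mk.injEq, true_and]
  split_ifs <;> first | omega | ring

lemma transOp_le_transOp (hQ : Q ∈ rowStochastic ℝ ι) (hf : ∀ α k, f α k ∈ Set.Icc (0 : ℝ) 1)
    {v w : ι → ℤ → ℝ} {α : ι} {i : ℤ} (hup : ∀ β, v β (i + 1) ≤ w β (i + 1))
    (hdown : ∀ β, v β (i - 1) ≤ w β (i - 1)) : transOp Q f v α i ≤ transOp Q f w α i := by
  refine Finset.sum_le_sum fun β _ => mul_le_mul_of_nonneg_left ?_ (nonneg_of_mem_rowStochastic hQ)
  exact add_le_add (mul_le_mul_of_nonneg_left (hup β) (hf β i).1)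
    (mul_le_mul_of_nonneg_left (hdown β) (sub_nonneg.2 (hf β i).2))

lemma transOp_monotone (hQ : Q ∈ rowStochastic ℝ ι) (hf : ∀ α k, f α k ∈ Set.Icc (0 : ℝ) 1) :
    Monotone (transOp Q f) :=
  fun _ _ h _ _ => transOp_le_transOp hQ hf (fun β => h β _) (fun β => h β _)

lemma transOp_const (hQ : Q ∈ rowStochastic ℝ ι) (c : ℝ) :
    transOp Q f (fun _ _ => c) = fun _ _ => c := by
  ext α i
  have h : ∀ β, Q α β * (f β i * c + (1 - f β i) * c) = Q α β * c := fun β => by ring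
  simp only [transOp, h, ← Finset.sum_mul, sum_row_of_mem_rowStochastic hQ, one_mul]

lemma mapsTo_transOp (hQ : Q ∈ rowStochastic ℝ ι)
    (hf : ∀ α k, f α k ∈ Set.Icc (0 : ℝ) 1) :
    Set.MapsTo (transOp Q f) (Set.Icc 0 1) (Set.Icc 0 1) := fun _ ⟨h0, h1⟩ =>
  ⟨(transOp_const hQ 0).symm.le.trans (transOp_monotone hQ hf h0),
    (transOp_monotone hQ hf h1).trans (transOp_const hQ 1).le⟩

lemma hitOp_monotone (hQ : Q ∈ rowStochastic ℝ ι) (hf : ∀ α k, f α k ∈ Set.Icc (0 : ℝ) 1) :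
    Monotone (hitOp Q f ℓ) :=
  (transOp_monotone hQ hf).comp withOneAt_monotone

lemma mapsTo_hitOp (hQ : Q ∈ rowStochastic ℝ ι)
    (hf : ∀ α k, f α k ∈ Set.Icc (0 : ℝ) 1) :
    Set.MapsTo (hitOp Q f ℓ) (Set.Icc 0 1) (Set.Icc 0 1) :=
  (mapsTo_transOp hQ hf).comp mapsTo_withOneAt

lemma hitProbWithin_mem_Icc (hQ : Q ∈ rowStochastic ℝ ι)
    (hf : ∀ α k, f α k ∈ Set.Icc (0 : ℝ) 1) (N : ℕ) :
    hitProbWithin Q f ℓ N ∈ Set.Icc 0 1 :=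
  (mapsTo_hitOp hQ hf).iterate N ⟨le_rfl, zero_le_one⟩

lemma monotone_hitProbWithin (hQ : Q ∈ rowStochastic ℝ ι)
    (hf : ∀ α k, f α k ∈ Set.Icc (0 : ℝ) 1) : Monotone (hitProbWithin Q f ℓ) :=
  (hitOp_monotone hQ hf).monotone_iterate_of_le_map (hitProbWithin_mem_Icc hQ hf 1).1

lemma bddAbove_hitProbWithin (hQ : Q ∈ rowStochastic ℝ ι)
    (hf : ∀ α k, f α k ∈ Set.Icc (0 : ℝ) 1) (α : ι) (i : ℤ) :
    BddAbove (Set.range fun N => hitProbWithin Q f ℓ N α i) :=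
  ⟨1, Set.forall_mem_range.2 fun N => (hitProbWithin_mem_Icc hQ hf N).2 α i⟩

lemma hitProbWithin_le_hitProb (hQ : Q ∈ rowStochastic ℝ ι)
    (hf : ∀ α k, f α k ∈ Set.Icc (0 : ℝ) 1) (N : ℕ) (α : ι) (i : ℤ) :
    hitProbWithin Q f ℓ N α i ≤ hitProb Q f ℓ α i :=
  le_ciSup (bddAbove_hitProbWithin hQ hf α i) N

lemma hitProb_mem_Icc (hQ : Q ∈ rowStochastic ℝ ι)
    (hf : ∀ α k, f α k ∈ Set.Icc (0 : ℝ) 1) : hitProb Q f ℓ ∈ Set.Icc 0 1 :=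
  ⟨fun α i => (hitProbWithin_mem_Icc hQ hf 0).1 α i |>.trans
      (hitProbWithin_le_hitProb hQ hf 0 α i),
    fun α i => ciSup_le fun N => (hitProbWithin_mem_Icc hQ hf N).2 α i⟩

lemma tendsto_hitProbWithin (hQ : Q ∈ rowStochastic ℝ ι)
    (hf : ∀ α k, f α k ∈ Set.Icc (0 : ℝ) 1) :
    Tendsto (hitProbWithin Q f ℓ) atTop (𝓝 (hitProb Q f ℓ)) :=
  tendsto_pi_nhds.2 fun α => tendsto_pi_nhds.2 fun i =>
    tendsto_atTop_ciSup (fun _ _ h => monotone_hitProbWithin hQ hf h α i)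
      (bddAbove_hitProbWithin hQ hf α i)

lemma hitOp_hitProb (hQ : Q ∈ rowStochastic ℝ ι)
    (hf : ∀ α k, f α k ∈ Set.Icc (0 : ℝ) 1) : hitOp Q f ℓ (hitProb Q f ℓ) = hitProb Q f ℓ :=
  isFixedPt_of_tendsto_iterate (tendsto_hitProbWithin hQ hf) continuous_hitOp.continuousAt

lemma hitProb_eq_one_of_stepPos (hQ : Q ∈ rowStochastic ℝ ι) (hf : ∀ α k, f α k ∈ Set.Ioo (0 : ℝ) 1)
    {α β : ι} {i j : ℤ} (h : hitProb Q f ℓ α i = 1) (hstep : StepPos Q (α, i) (β, j))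
    (hj : j ≠ ℓ) : hitProb Q f ℓ β j = 1 := by
  have hf' : ∀ α k, f α k ∈ Set.Icc (0 : ℝ) 1 := fun α k => Set.Ioo_subset_Icc_self (hf α k)
  set w := withOneAt ℓ (hitProb Q f ℓ)
  have hw : ∀ β j, w β j ≤ 1 := (mapsTo_withOneAt (hitProb_mem_Icc hQ hf')).2
  set g : ι → ℝ := fun β => f β i * w β (i + 1) + (1 - f β i) * w β (i - 1)
  have hg : ∀ β, g β ≤ 1 := fun β => by
    obtain ⟨h0, h1⟩ := hf β i
    simp only [g]
    nlinarith [hw β (i + 1), hw β (i - 1)]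
  have hsum : ∑ γ, Q α γ * g γ = ∑ γ, Q α γ * 1 :=
    calc ∑ γ, Q α γ * g γ = hitProb Q f ℓ α i := congrFun₂ (hitOp_hitProb hQ hf') α i
      _ = ∑ γ, Q α γ * 1 := by simp [h, sum_row_of_mem_rowStochastic hQ]
  have hgβ : g β = 1 := by
    have := (Finset.sum_eq_sum_iff_of_le fun γ _ => mul_le_mul_of_nonneg_left (hg γ)
      (nonneg_of_mem_rowStochastic hQ)).1 hsum β (Finset.mem_univ β)
    exact (mul_right_inj' hstep.1.ne').1 this
  obtain ⟨hup, hdown⟩ := eq_one_of_convexComb_eq_one (hf β i) (hw β _) (hw β _) hgβ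
  rcases hstep.2 with rfl | rfl
  · simpa [w, withOneAt, hj] using hup
  · simpa [w, withOneAt, hj] using hdown

lemma hitProbWithin_le_of_lt_of_le (hQ : Q ∈ rowStochastic ℝ ι)
    (hf : ∀ α k, f α k ∈ Set.Icc (0 : ℝ) 1)
    {ℓ' : ℤ} (hℓ : ℓ ≤ ℓ') (N : ℕ) :
    ∀ α j, j < ℓ → hitProbWithin Q f ℓ' N α j ≤ hitProbWithin Q f ℓ N α j := by
  induction N with
  | zero => exact fun _ _ _ => le_rfl
  | succ N ih =>
    intro α j hj
    simp only [hitProbWithin, Function.iterate_succ_apply'] at ih ⊢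
    refine transOp_le_transOp hQ hf (fun β => ?_) (fun β => ?_) <;> unfold withOneAt
    · split_ifs
      · exact le_rfl
      · omega
      · exact (hitProbWithin_mem_Icc hQ hf N).2 β _
      · exact ih β _ (by omega)
    · rw [if_neg (by omega), if_neg (by omega)]
      exact ih β _ (by omega)

/-- To reach `ℓ' ≥ ℓ` from below `ℓ`, the walk has to pass through `ℓ`. -/
lemma hitProb_le_of_lt_of_le (hQ : Q ∈ rowStochastic ℝ ι)
    (hf : ∀ α k, f α k ∈ Set.Icc (0 : ℝ) 1) {α : ι} {j ℓ' : ℤ} (hj : j < ℓ) (hℓ : ℓ ≤ ℓ') :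
    hitProb Q f ℓ' α j ≤ hitProb Q f ℓ α j :=
  ciSup_le fun N => (hitProbWithin_le_of_lt_of_le hQ hf hℓ N α j hj).trans
    (hitProbWithin_le_hitProb hQ hf N α j)

lemma hitProb_le_of_le_of_lt (hQ : Q ∈ rowStochastic ℝ ι)
    (hf : ∀ α k, f α k ∈ Set.Icc (0 : ℝ) 1) {α : ι} {j ℓ' : ℤ} (hℓ : ℓ' ≤ ℓ) (hj : ℓ < j) :
    hitProb Q f ℓ' α j ≤ hitProb Q f ℓ α j := by
  simpa [hitProb_reflect] using
    hitProb_le_of_lt_of_le hQ (reflect_mem_Icc hf) (α := α) (neg_lt_neg hj) (neg_le_neg hℓ)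

lemma exists_hitProb_eq_one_of_lt (hQ : Q ∈ rowStochastic ℝ ι)
    (hf : ∀ α k, f α k ∈ Set.Ioo (0 : ℝ) 1) {α : ι} {s t : ℤ} (h : hitProb Q f ℓ α s = 1)
    (hs : s < ℓ) (ht : t < ℓ) : ∃ γ, hitProb Q f ℓ γ t = 1 := by
  have move : ∀ x y, (∃ γ, hitProb Q f ℓ γ x = 1) → (y = x + 1 ∨ y = x - 1) → y ≠ ℓ →
      ∃ γ, hitProb Q f ℓ γ y = 1 := fun x y ⟨γ, hγ⟩ hy hyℓ =>
    let ⟨γ', hγ'⟩ := exists_pos_of_mem_rowStochastic hQ γ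
    ⟨γ', hitProb_eq_one_of_stepPos hQ hf hγ ⟨hγ', hy⟩ hyℓ⟩
  rcases le_total t s with hts | hst
  · exact Int.leInductionDown (motive := fun t _ => t < ℓ → ∃ γ, hitProb Q f ℓ γ t = 1)
      (fun _ => ⟨α, h⟩) (fun x _ ih hx => move x _ (ih (by omega)) (Or.inr rfl) (by omega)) t hts ht
  · exact Int.leInduction (motive := fun t _ => t < ℓ → ∃ γ, hitProb Q f ℓ γ t = 1)
      (fun _ => ⟨α, h⟩) (fun x _ ih hx => move x _ (ih (by omega)) (Or.inl rfl) (by omega)) t hst ht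

lemma exists_hitProb_eq_one_of_gt (hQ : Q ∈ rowStochastic ℝ ι)
    (hf : ∀ α k, f α k ∈ Set.Ioo (0 : ℝ) 1) {α : ι} {s t : ℤ} (h : hitProb Q f ℓ α s = 1)
    (hs : ℓ < s) (ht : ℓ < t) : ∃ γ, hitProb Q f ℓ γ t = 1 := by
  simpa [hitProb_reflect] using exists_hitProb_eq_one_of_lt hQ (reflect_mem_Ioo hf) (α := α)
    (s := -s) (by simpa [hitProb_reflect] using h) (neg_lt_neg hs) (neg_lt_neg ht)

lemma hitProb_eq_one_Ico_of_pos (hQ : Q ∈ rowStochastic ℝ ι)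
    (hf : ∀ α k, f α k ∈ Set.Ioo (0 : ℝ) 1) {γ γ' : ι} {a : ℤ} (ha : a + 1 < ℓ)
    (h : ∀ y ∈ Set.Ico a ℓ, hitProb Q f ℓ γ y = 1) (hγ : 0 < Q γ γ') :
    ∀ y ∈ Set.Ico (a - 1) ℓ, hitProb Q f ℓ γ' y = 1 := by
  rintro y ⟨hy₁, hy₂⟩
  by_cases hy : y + 1 < ℓ
  · exact hitProb_eq_one_of_stepPos hQ hf (h (y + 1) ⟨by omega, hy⟩)
      ⟨hγ, Or.inr (by simp)⟩ (by omega)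
  · exact hitProb_eq_one_of_stepPos hQ hf (h (ℓ - 2) ⟨by omega, by omega⟩)
      ⟨hγ, Or.inl (by simp; omega)⟩ (by omega)

lemma hitProb_eq_one_Ico_of_path (hQ : Q ∈ rowStochastic ℝ ι)
    (hf : ∀ α k, f α k ∈ Set.Ioo (0 : ℝ) 1) {g : ℕ → ι} {a : ℤ} (ha : a + 1 < ℓ)
    (h : ∀ y ∈ Set.Ico a ℓ, hitProb Q f ℓ (g 0) y = 1) :
    ∀ n : ℕ, (∀ k < n, 0 < Q (g k) (g (k + 1))) →
      ∀ y ∈ Set.Ico (a - n) ℓ, hitProb Q f ℓ (g n) y = 1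
  | 0, _ => by simpa using h
  | n + 1, hg => by
    have := hitProb_eq_one_Ico_of_pos hQ hf (by omega)
      (hitProb_eq_one_Ico_of_path hQ hf ha h n fun k hk => hg k (by omega)) (hg n (by omega))
    simpa [sub_sub] using this

/-- Every `α` is reached from `γ`, and then again from itself through a cycle; each regime
change extends the interval by one to the left. -/
lemma hitProb_eq_one_of_Ico (hQ : Q ∈ rowStochastic ℝ ι)
    (hf : ∀ α k, f α k ∈ Set.Ioo (0 : ℝ) 1) (hirr : MatIrreducible Q) {γ : ι} {a : ℤ}
    (ha : a + 1 < ℓ) (h : ∀ y ∈ Set.Ico a ℓ, hitProb Q f ℓ γ y = 1) (α : ι) {i : ℤ}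
    (hi : i < ℓ) : hitProb Q f ℓ α i = 1 := by
  have reach : ∀ γ' b, b + 1 < ℓ → (∀ y ∈ Set.Ico b ℓ, hitProb Q f ℓ γ' y = 1) →
      ∃ b' ≤ b, ∀ y ∈ Set.Ico b' ℓ, hitProb Q f ℓ α y = 1 := by
    intro γ' b hb hγ'
    obtain ⟨n, g, rfl, rfl, hg⟩ := hirr γ' α
    exact ⟨b - n, by omega, hitProb_eq_one_Ico_of_path hQ hf hb hγ' n hg⟩
  have extend : ∀ k : ℕ, ∃ b ≤ a - k, ∀ y ∈ Set.Ico b ℓ, hitProb Q f ℓ α y = 1 := by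
    intro k
    induction k with
    | zero => simpa using reach γ a ha h
    | succ k ih =>
      obtain ⟨b, hb, hα⟩ := ih
      obtain ⟨β, hβ⟩ := exists_pos_of_mem_rowStochastic hQ α
      obtain ⟨b', hb', hα'⟩ := reach β (b - 1) (by omega)
        (hitProb_eq_one_Ico_of_pos hQ hf (by omega) hα hβ)
      exact ⟨b', by omega, hα'⟩
  obtain ⟨b, hb, hα⟩ := extend (a - i).toNat
  exact hα i ⟨by omega, hi⟩

lemma exists_hitProb_eq_one_Ico_of_pair (hQ : Q ∈ rowStochastic ℝ ι)
    (hf : ∀ α k, f α k ∈ Set.Ioo (0 : ℝ) 1) {β : ι} {j : ℤ} (hj : j + 1 < ℓ)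
    (h₀ : hitProb Q f ℓ β j = 1) (h₁ : hitProb Q f ℓ β (j + 1) = 1) :
    ∃ γ, ∀ y ∈ Set.Ico (ℓ - 2) ℓ, hitProb Q f ℓ γ y = 1 := by
  have climb : ∀ x, x + 2 < ℓ → (∃ γ, hitProb Q f ℓ γ x = 1 ∧ hitProb Q f ℓ γ (x + 1) = 1) →
      ∃ γ, hitProb Q f ℓ γ (x + 1) = 1 ∧ hitProb Q f ℓ γ (x + 1 + 1) = 1 := by
    rintro x hx ⟨γ, hγ₀, hγ₁⟩
    obtain ⟨γ', hγ'⟩ := exists_pos_of_mem_rowStochastic hQ γ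
    exact ⟨γ', hitProb_eq_one_of_stepPos hQ hf hγ₀ ⟨hγ', Or.inl rfl⟩ (by omega),
      hitProb_eq_one_of_stepPos hQ hf hγ₁ ⟨hγ', Or.inl rfl⟩ (by omega)⟩
  obtain ⟨γ, hγ₀, hγ₁⟩ := Int.leInduction (m := j)
    (motive := fun x _ => x ≤ ℓ - 2 →
      ∃ γ, hitProb Q f ℓ γ x = 1 ∧ hitProb Q f ℓ γ (x + 1) = 1)
    (fun _ => ⟨β, h₀, h₁⟩) (fun x _ ih hx => climb x (by omega) (ih (by omega)))
    (ℓ - 2) (by omega) le_rfl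
  refine ⟨γ, fun y ⟨hy₁, hy₂⟩ => ?_⟩
  obtain rfl | rfl : y = ℓ - 2 ∨ y = ℓ - 2 + 1 := by omega
  exacts [hγ₀, hγ₁]

lemma hitProb_eq_one_of_pair_lt (hQ : Q ∈ rowStochastic ℝ ι)
    (hf : ∀ α k, f α k ∈ Set.Ioo (0 : ℝ) 1) (hirr : MatIrreducible Q) {β : ι} {j : ℤ}
    (hj : j + 1 < ℓ) (h₀ : hitProb Q f ℓ β j = 1) (h₁ : hitProb Q f ℓ β (j + 1) = 1) (α : ι)
    {i : ℤ} (hi : i < ℓ) : hitProb Q f ℓ α i = 1 :=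
  let ⟨_, hγ⟩ := exists_hitProb_eq_one_Ico_of_pair hQ hf hj h₀ h₁
  hitProb_eq_one_of_Ico hQ hf hirr (by omega) hγ α hi

lemma hitProb_eq_one_of_pair_gt (hQ : Q ∈ rowStochastic ℝ ι)
    (hf : ∀ α k, f α k ∈ Set.Ioo (0 : ℝ) 1) (hirr : MatIrreducible Q) {β : ι} {j : ℤ}
    (hj : ℓ < j) (h₀ : hitProb Q f ℓ β j = 1) (h₁ : hitProb Q f ℓ β (j + 1) = 1) (α : ι)
    {i : ℤ} (hi : ℓ < i) : hitProb Q f ℓ α i = 1 := by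
  have := hitProb_eq_one_of_pair_lt hQ (reflect_mem_Ioo hf) hirr (j := -(j + 1)) (by omega)
    (by simpa [hitProb_reflect] using h₁) (by simpa [hitProb_reflect] using h₀) α
    (neg_lt_neg hi)
  simpa [hitProb_reflect] using this

end HittingProbability

section PrefixCylinders

variable {X : Type*}

def prefixCylinder (n : ℕ) (x : ℕ → X) : Set (ℕ → X) := {ω | ∀ k ≤ n, ω k = x k}

def prefixCylinders : Set (Set (ℕ → X)) := {s | ∃ n x, prefixCylinder n x = s}

lemma prefixCylinder_inter_of_le {n₁ n₂ : ℕ} {x₁ x₂ : ℕ → X} (hn : n₁ ≤ n₂)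
    (hne : (prefixCylinder n₁ x₁ ∩ prefixCylinder n₂ x₂).Nonempty) :
    prefixCylinder n₁ x₁ ∩ prefixCylinder n₂ x₂ = prefixCylinder n₂ x₂ := by
  obtain ⟨ω₀, hω₁, hω₂⟩ := hne
  refine Set.inter_eq_self_of_subset_right fun ω hω k hk => ?_
  rw [hω k (hk.trans hn), ← hω₂ k (hk.trans hn), hω₁ k hk]

lemma isPiSystem_prefixCylinders : IsPiSystem (prefixCylinders (X := X)) := by
  rintro _ ⟨n₁, x₁, rfl⟩ _ ⟨n₂, x₂, rfl⟩ hne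
  rcases le_total n₁ n₂ with h | h
  · exact ⟨n₂, x₂, (prefixCylinder_inter_of_le h hne).symm⟩
  · rw [Set.inter_comm] at hne ⊢
    exact ⟨n₁, x₁, (prefixCylinder_inter_of_le h hne).symm⟩

def shift (ω : ℕ → X) : ℕ → X := fun n => ω (n + 1)

def prepend (x : X) (ω : ℕ → X) : ℕ → X
  | 0 => x
  | k + 1 => ω k

lemma shift_preimage_prefixCylinder_inter (n : ℕ) (x : ℕ → X) (x₀ : X) :
    shift ⁻¹' prefixCylinder n x ∩ {ω | ω 0 = x₀} = prefixCylinder (n + 1) (prepend x₀ x) := by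
  ext ω
  simp only [Set.mem_inter_iff, Set.mem_preimage, prefixCylinder, shift, Set.mem_ofPred_eq]
  refine ⟨fun ⟨h, h₀⟩ k hk => ?_, fun h => ⟨fun k hk => h (k + 1) (by omega), h 0 (by omega)⟩⟩
  cases k with
  | zero => exact h₀
  | succ k => exact h k (by omega)

variable [MeasurableSpace X]

lemma measurable_shift : Measurable (shift : (ℕ → X) → ℕ → X) := by
  unfold shift
  fun_prop

variable [MeasurableSingletonClass X]

lemma measurableSet_prefixCylinder (n : ℕ) (x : ℕ → X) : MeasurableSet (prefixCylinder n x) := by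
  unfold prefixCylinder
  measurability

lemma generateFrom_prefixCylinders [Countable X] :
    MeasurableSpace.generateFrom prefixCylinders =
      (MeasurableSpace.pi : MeasurableSpace (ℕ → X)) := by
  refine le_antisymm (MeasurableSpace.generateFrom_le ?_) (iSup_le fun k => ?_)
  · rintro _ ⟨n, x, rfl⟩
    exact measurableSet_prefixCylinder n x
  · rintro _ ⟨A, -, rfl⟩
    have hfiber : ∀ v : X, {ω : ℕ → X | ω k = v} =
        ⋃ t : Fin k → X, prefixCylinder k fun j => if h : j < k then t ⟨j, h⟩ else v := by
      intro v
      ext ω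
      simp only [Set.mem_iUnion, prefixCylinder]
      refine ⟨fun hω => ⟨fun j => ω j, fun j hj => ?_⟩, fun ⟨t, ht⟩ => by simpa using ht k le_rfl⟩
      split_ifs with h
      · rfl
      · rw [le_antisymm hj (not_lt.1 h), hω]
    have : (fun ω : ℕ → X => ω k) ⁻¹' A = ⋃ v ∈ A, {ω | ω k = v} := by
      ext ω
      simp
    rw [this]
    refine MeasurableSet.biUnion A.to_countable fun v _ => ?_
    rw [hfiber]
    exact MeasurableSet.iUnion fun t => MeasurableSpace.measurableSet_generateFrom ⟨k, _, rfl⟩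

end PrefixCylinders

def hitBy {ι : Type*} (ℓ : ℤ) (N : ℕ) : Set (ℕ → ι × ℤ) := {ω | ∃ n ∈ Finset.Icc 1 N, (ω n).2 = ℓ}

lemma measurableSet_hitBy {ι : Type*} [MeasurableSpace ι] (ℓ : ℤ) (N : ℕ) :
    MeasurableSet (hitBy (ι := ι) ℓ N) := by
  unfold hitBy
  measurability

section QuenchedLaw

variable {ι : Type*} [DecidableEq ι] [MeasurableSpace ι] {Q : Matrix ι ι ℝ} {f : ι → ℤ → ℝ}
  {μ : ι → ℤ → Measure (ℕ → ι × ℤ)}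

lemma IsQuenchedLaw.measure_prefixCylinder (hμ : IsQuenchedLaw Q f μ) (α : ι) (i : ℤ) (n : ℕ)
    (x : ℕ → ι × ℤ) :
    μ α i (prefixCylinder n x) = (if x 0 = (α, i) then 1 else 0) *
      ENNReal.ofReal (∏ k ∈ Finset.range n, step Q f (x k) (x (k + 1))) :=
  (hμ α i).2 n x

lemma IsQuenchedLaw.ae_start [MeasurableSingletonClass ι] (hμ : IsQuenchedLaw Q f μ) (α : ι)
    (i : ℤ) :
    ∀ᵐ ω ∂μ α i, ω 0 = (α, i) := by
  have := (hμ α i).1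
  have h := (hμ α i).2 0 fun _ => (α, i)
  simp only [Finset.range_zero, Finset.prod_empty, ENNReal.ofReal_one, if_true, mul_one,
    Nat.le_zero, forall_eq] at h
  exact (prob_compl_eq_zero_iff (measurable_pi_apply 0 (measurableSet_singleton _))).2 h

variable [Fintype ι]

/-- The law of `(G_{n+1}, X_{n+1})_{n ≥ 0}` under `P_{αi}`, by conditioning on the first step. -/
noncomputable def stepMixture (Q : Matrix ι ι ℝ) (f : ι → ℤ → ℝ)
    (μ : ι → ℤ → Measure (ℕ → ι × ℤ)) (α : ι) (i : ℤ) : Measure (ℕ → ι × ℤ) :=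
  ∑ β, (ENNReal.ofReal (Q α β * f β i) • μ β (i + 1) +
    ENNReal.ofReal (Q α β * (1 - f β i)) • μ β (i - 1))

lemma stepMixture_apply (hQ : Q ∈ rowStochastic ℝ ι) (hf : ∀ α k, f α k ∈ Set.Icc (0 : ℝ) 1)
    [∀ α i, IsFiniteMeasure (μ α i)] (α : ι) (i : ℤ) (s : Set (ℕ → ι × ℤ)) :
    stepMixture Q f μ α i s = ENNReal.ofReal (transOp Q f (fun β j => (μ β j s).toReal) α i) := by
  have hQ0 : ∀ β, 0 ≤ Q α β := fun β => nonneg_of_mem_rowStochastic hQ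
  rw [transOp, ENNReal.ofReal_sum_of_nonneg fun β _ => mul_nonneg (hQ0 β) (add_nonneg
    (mul_nonneg (hf β i).1 ENNReal.toReal_nonneg)
    (mul_nonneg (sub_nonneg.2 (hf β i).2) ENNReal.toReal_nonneg))]
  simp only [stepMixture, Measure.coe_finsetSum, Finset.sum_apply, Measure.coe_add,
    Measure.coe_smul, Pi.add_apply, Pi.smul_apply, smul_eq_mul]
  refine Finset.sum_congr rfl fun β _ => ?_
  rw [mul_add, ENNReal.ofReal_add (mul_nonneg (hQ0 β) (mul_nonneg (hf β i).1 ENNReal.toReal_nonneg))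
    (mul_nonneg (hQ0 β) (mul_nonneg (sub_nonneg.2 (hf β i).2) ENNReal.toReal_nonneg)),
    ← mul_assoc, ← mul_assoc, ENNReal.ofReal_mul (mul_nonneg (hQ0 β) (hf β i).1),
    ENNReal.ofReal_mul (mul_nonneg (hQ0 β) (sub_nonneg.2 (hf β i).2)),
    ENNReal.ofReal_toReal (measure_ne_top _ _), ENNReal.ofReal_toReal (measure_ne_top _ _)]

lemma IsQuenchedLaw.toReal_prefixCylinder (hμ : IsQuenchedLaw Q f μ) (hQ : Q ∈ rowStochastic ℝ ι)
    (hf : ∀ α k, f α k ∈ Set.Icc (0 : ℝ) 1) (n : ℕ) (x : ℕ → ι × ℤ) (β : ι) (j : ℤ) :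
    (μ β j (prefixCylinder n x)).toReal =
      if x 0 = (β, j) then ∏ k ∈ Finset.range n, step Q f (x k) (x (k + 1)) else 0 := by
  rw [hμ.measure_prefixCylinder]
  split_ifs
  · rw [one_mul, ENNReal.toReal_ofReal (Finset.prod_nonneg fun k _ => step_nonneg hQ hf _ _)]
  · rw [zero_mul, ENNReal.toReal_zero]

variable [MeasurableSingletonClass ι]

/-- The Markov property at time `1`. -/
lemma IsQuenchedLaw.map_shift (hμ : IsQuenchedLaw Q f μ) (hQ : Q ∈ rowStochastic ℝ ι)
    (hf : ∀ α k, f α k ∈ Set.Icc (0 : ℝ) 1) (α : ι) (i : ℤ) :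
    (μ α i).map shift = stepMixture Q f μ α i := by
  have := fun β j => (hμ β j).1
  refine ext_of_generate_finite _ generateFrom_prefixCylinders.symm isPiSystem_prefixCylinders
    ?_ ?_
  · rintro _ ⟨n, x, rfl⟩
    rw [Measure.map_apply measurable_shift (measurableSet_prefixCylinder n x),
      ← measure_inter_conull (hμ.ae_start α i), shift_preimage_prefixCylinder_inter,
      hμ.measure_prefixCylinder,
      stepMixture_apply hQ hf]
    simp only [hμ.toReal_prefixCylinder hQ hf, transOp_indicator, Finset.prod_range_succ']
    simp [prepend, mul_comm]
  · rw [Measure.map_apply measurable_shift MeasurableSet.univ, Set.preimage_univ, measure_univ,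
      stepMixture_apply hQ hf]
    simp [transOp_const hQ]

lemma IsQuenchedLaw.measure_hitBy (hμ : IsQuenchedLaw Q f μ) (hQ : Q ∈ rowStochastic ℝ ι)
    (hf : ∀ α k, f α k ∈ Set.Icc (0 : ℝ) 1) (ℓ : ℤ) (N : ℕ) (α : ι) (i : ℤ) :
    μ α i (hitBy ℓ N) = ENNReal.ofReal (hitProbWithin Q f ℓ N α i) := by
  induction N generalizing α i with
  | zero => simp [hitBy, hitProbWithin]
  | succ N ih =>
    set B : Set (ℕ → ι × ℤ) := hitBy ℓ N ∪ {ω | (ω 0).2 = ℓ}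
    have hB : MeasurableSet B := (measurableSet_hitBy ℓ N).union
      ((measurable_snd.comp (measurable_pi_apply 0)) (measurableSet_singleton ℓ))
    have hpre : hitBy ℓ (N + 1) = shift ⁻¹' B := by
      ext ω
      simp only [hitBy, B, shift, Set.mem_preimage, Set.mem_union, Set.mem_ofPred_eq,
        Finset.mem_Icc]
      constructor
      · rintro ⟨_ | _ | n, hn, hω⟩
        exacts [absurd hn.1 (by omega), Or.inr hω, Or.inl ⟨n + 1, by omega, hω⟩]
      · rintro (⟨n, hn, hω⟩ | hω)
        exacts [⟨n + 1, by omega, hω⟩, ⟨1, by omega, hω⟩]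
    have hval : ∀ β j, (μ β j B).toReal = withOneAt ℓ (hitProbWithin Q f ℓ N) β j := by
      intro β j
      have := (hμ β j).1
      unfold withOneAt
      split_ifs with hj
      · rw [measure_congr (t := Set.univ) (eventuallyEq_set.2 ((hμ.ae_start β j).mono
          fun ω hω => by simp [B, hω, hj])), measure_univ, ENNReal.toReal_one]
      · rw [measure_congr (t := hitBy ℓ N) (eventuallyEq_set.2 ((hμ.ae_start β j).mono
          fun ω hω => by simp [B, hω, hj])), ih, ENNReal.toReal_ofReal
          ((hitProbWithin_mem_Icc hQ hf N).1 β j)]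
    have := fun β j => (hμ β j).1
    rw [hpre, ← Measure.map_apply measurable_shift hB, hμ.map_shift hQ hf, stepMixture_apply hQ hf,
      hitProbWithin,
      Function.iterate_succ_apply', hitOp, funext₂ hval]
    rfl

lemma IsQuenchedLaw.measure_hitEvent (hμ : IsQuenchedLaw Q f μ) (hQ : Q ∈ rowStochastic ℝ ι)
    (hf : ∀ α k, f α k ∈ Set.Icc (0 : ℝ) 1) (ℓ : ℤ) (α : ι) (i : ℤ) :
    μ α i (hitEvent ℓ) = ENNReal.ofReal (hitProb Q f ℓ α i) := by
  have hunion : hitEvent ℓ = ⋃ N, hitBy (ι := ι) ℓ N := by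
    ext ω
    simp only [hitEvent, hitBy, Set.mem_iUnion, Set.mem_ofPred_eq, Finset.mem_Icc]
    exact ⟨fun ⟨n, hn, hω⟩ => ⟨n, n, ⟨hn, le_rfl⟩, hω⟩, fun ⟨_, n, hn, hω⟩ => ⟨n, hn.1, hω⟩⟩
  have hmono : Monotone (hitBy (ι := ι) ℓ) := fun N N' h ω ⟨n, hn, hω⟩ =>
    ⟨n, Finset.Icc_subset_Icc le_rfl h hn, hω⟩
  refine hunion ▸ tendsto_nhds_unique (tendsto_measure_iUnion_atTop hmono) ?_
  simp only [Function.comp_def, hμ.measure_hitBy hQ hf]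
  exact (ENNReal.continuous_ofReal.tendsto _).comp
    (tendsto_pi_nhds.1 (tendsto_pi_nhds.1 (tendsto_hitProbWithin hQ hf) α) i)

lemma IsQuenchedLaw.measure_hitEvent_eq_one_iff (hμ : IsQuenchedLaw Q f μ)
    (hQ : Q ∈ rowStochastic ℝ ι) (hf : ∀ α k, f α k ∈ Set.Icc (0 : ℝ) 1) (ℓ : ℤ) (α : ι) (i : ℤ) :
    μ α i (hitEvent ℓ) = 1 ↔ hitProb Q f ℓ α i = 1 := by
  rw [hμ.measure_hitEvent hQ hf, ENNReal.ofReal_eq_one]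

lemma IsQuenchedLaw.fnorm_eq_one_iff (hμ : IsQuenchedLaw Q f μ) (hQ : Q ∈ rowStochastic ℝ ι)
    (hf : ∀ α k, f α k ∈ Set.Icc (0 : ℝ) 1) (i ℓ : ℤ) :
    fnorm μ i ℓ = 1 ↔ ∃ α, hitProb Q f ℓ α i = 1 := by
  have h : ∀ α, (μ α i (hitEvent ℓ)).toReal = hitProb Q f ℓ α i := fun α => by
    rw [hμ.measure_hitEvent hQ hf, ENNReal.toReal_ofReal ((hitProb_mem_Icc hQ hf).1 α i)]
  simp only [fnorm, h]
  exact ciSup_eq_one_iff fun α => (hitProb_mem_Icc hQ hf).2 α i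

end QuenchedLaw

section Environment

variable {ι : Type*} [Fintype ι] {Q : Matrix ι ι ℝ} {E : Type*} [MeasurableSpace E]
  {P : Measure E} {T : E → E} {p : ι → ℤ → E → ℝ} {ℓ : ℤ}

lemma measurable_hitProb (hp : ∀ α k, Measurable (p α k)) (ℓ : ℤ) (α : ι) (i : ℤ) :
    Measurable fun e => hitProb Q (fun α k => p α k e) ℓ α i := by
  have h : ∀ N α i, Measurable fun e => hitProbWithin Q (fun α k => p α k e) ℓ N α i := by
    intro N
    induction N with
    | zero => exact fun _ _ => measurable_const
    | succ N ih =>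
      intro α i
      simp only [hitProbWithin, Function.iterate_succ_apply', hitOp, transOp, withOneAt] at ih ⊢
      refine Finset.measurable_sum _ fun β _ => ?_
      have := ih β (i + 1)
      have := ih β (i - 1)
      split_ifs <;> fun_prop
  exact Measurable.iSup fun N => h N α i

lemma ae_hitProb_succ_iff (hT : MeasurePreserving T P P) (hp : ∀ α k, Measurable (p α k))
    (hpT : ∀ α k e, p α k (T e) = p α (k + 1) e) (ℓ : ℤ) (α : ι) (i : ℤ) :
    (∀ᵐ e ∂P, hitProb Q (fun α k => p α k e) (ℓ + 1) α (i + 1) = 1) ↔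
      ∀ᵐ e ∂P, hitProb Q (fun α k => p α k e) ℓ α i = 1 := by
  have h : ∀ e, hitProb Q (fun α k => p α k (T e)) ℓ α i =
      hitProb Q (fun α k => p α k e) (ℓ + 1) α (i + 1) := fun e => by
    simp only [hpT]
    exact hitProb_translate (f := fun α k => p α k e) 1 α i
  simp only [← h]
  exact hT.ae_comp_iff (measurable_hitProb hp ℓ α i (measurableSet_singleton 1))

variable [DecidableEq ι]

lemma ae_hitProb_eq_one_of_lt (hQ : Q ∈ rowStochastic ℝ ι)
    (hp01 : ∀ α k e, p α k e ∈ Set.Ioo (0 : ℝ) 1) (hp : ∀ α k, Measurable (p α k))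
    (hT : MeasurePreserving T P P) (hpT : ∀ α k e, p α k (T e) = p α (k + 1) e)
    (hirr : MatIrreducible Q) {α₀ : ι} {i₀ : ℤ} (hi₀ : i₀ < ℓ)
    (h : ∀ᵐ e ∂P, hitProb Q (fun α k => p α k e) ℓ α₀ i₀ = 1) (α : ι) {i : ℤ} (hi : i < ℓ) :
    ∀ᵐ e ∂P, hitProb Q (fun α k => p α k e) ℓ α i = 1 := by
  have hf : ∀ e α k, p α k e ∈ Set.Icc (0 : ℝ) 1 := fun e α k =>
    Set.Ioo_subset_Icc_self (hp01 α k e)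
  obtain ⟨β, hβ⟩ := exists_pos_of_mem_rowStochastic hQ α₀
  have hdown : ∀ᵐ e ∂P, hitProb Q (fun α k => p α k e) ℓ β (i₀ - 1) = 1 := h.mono fun e he =>
    hitProb_eq_one_of_stepPos hQ (fun α k => hp01 α k e) he ⟨hβ, Or.inr rfl⟩ (by omega)
  have h₀ : ∀ᵐ e ∂P, hitProb Q (fun α k => p α k e) ℓ β i₀ = 1 := by
    filter_upwards [(ae_hitProb_succ_iff hT hp hpT ℓ β (i₀ - 1)).2 hdown] with e he
    rw [sub_add_cancel] at he
    exact le_antisymm ((hitProb_mem_Icc hQ (hf e)).2 β i₀)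
      (he ▸ hitProb_le_of_lt_of_le hQ (hf e) hi₀ (by omega))
  filter_upwards [hdown, h₀] with e h₁ h₂
  exact hitProb_eq_one_of_pair_lt hQ (fun α k => hp01 α k e) hirr (by omega) h₁
    (by rwa [sub_add_cancel]) α hi

lemma ae_hitProb_eq_one_of_gt (hQ : Q ∈ rowStochastic ℝ ι)
    (hp01 : ∀ α k e, p α k e ∈ Set.Ioo (0 : ℝ) 1) (hp : ∀ α k, Measurable (p α k))
    (hT : MeasurePreserving T P P) (hpT : ∀ α k e, p α k (T e) = p α (k + 1) e)
    (hirr : MatIrreducible Q) {α₀ : ι} {i₀ : ℤ} (hi₀ : ℓ < i₀)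
    (h : ∀ᵐ e ∂P, hitProb Q (fun α k => p α k e) ℓ α₀ i₀ = 1) (α : ι) {i : ℤ} (hi : ℓ < i) :
    ∀ᵐ e ∂P, hitProb Q (fun α k => p α k e) ℓ α i = 1 := by
  have hf : ∀ e α k, p α k e ∈ Set.Icc (0 : ℝ) 1 := fun e α k =>
    Set.Ioo_subset_Icc_self (hp01 α k e)
  obtain ⟨β, hβ⟩ := exists_pos_of_mem_rowStochastic hQ α₀
  have hup : ∀ᵐ e ∂P, hitProb Q (fun α k => p α k e) ℓ β (i₀ + 1) = 1 := h.mono fun e he =>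
    hitProb_eq_one_of_stepPos hQ (fun α k => hp01 α k e) he ⟨hβ, Or.inl rfl⟩ (by omega)
  have h₀ : ∀ᵐ e ∂P, hitProb Q (fun α k => p α k e) ℓ β i₀ = 1 := by
    filter_upwards [(ae_hitProb_succ_iff hT hp hpT (ℓ - 1) β i₀).1 (by simpa using hup)] with e he
    exact le_antisymm ((hitProb_mem_Icc hQ (hf e)).2 β i₀)
      (he ▸ hitProb_le_of_le_of_lt hQ (hf e) (by omega) hi₀)
  filter_upwards [h₀, hup] with e h₁ h₂
  exact hitProb_eq_one_of_pair_gt hQ (fun α k => hp01 α k e) hirr hi₀ h₁ h₂ α hi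

end Environment

theorem stmt4_prop_time3_general {m : ℕ}
    {E : Type*} [MeasurableSpace E] (P : Measure E)
    (T : E → E) (hT : Ergodic T P)
    (Q : Matrix (Fin m) (Fin m) ℝ)
    (hQ0 : ∀ α β, 0 ≤ Q α β) (hQ1 : ∀ α, ∑ β, Q α β = 1)
    (p : Fin m → ℤ → E → ℝ) (hpmeas : ∀ α k, Measurable (p α k))
    (hp01 : ∀ α k e, p α k e ∈ Set.Ioo (0 : ℝ) 1)
    (hpT : ∀ α k e, p α k (T e) = p α (k + 1) e)
    (μ : E → Fin m → ℤ → Measure (ℕ → Fin m × ℤ))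
    (hμ : ∀ e, IsQuenchedLaw Q (fun α k => p α k e) (μ e))
    (ℓ : ℤ) :
    (∀ e : E,
      ((∃ i < ℓ, fnorm (μ e) i ℓ = 1) → ∀ i < ℓ, fnorm (μ e) i ℓ = 1) ∧
      ((∃ i, ℓ < i ∧ fnorm (μ e) i ℓ = 1) → ∀ i, ℓ < i → fnorm (μ e) i ℓ = 1)) ∧
    (MatIrreducible Q →
      ((∃ (α : Fin m) (i : ℤ), i < ℓ ∧ ∀ᵐ e ∂P, μ e α i (hitEvent ℓ) = 1) →
        ∀ (α : Fin m) (i : ℤ), i < ℓ → ∀ᵐ e ∂P, μ e α i (hitEvent ℓ) = 1) ∧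
      ((∃ (α : Fin m) (i : ℤ), ℓ < i ∧ ∀ᵐ e ∂P, μ e α i (hitEvent ℓ) = 1) →
        ∀ (α : Fin m) (i : ℤ), ℓ < i → ∀ᵐ e ∂P, μ e α i (hitEvent ℓ) = 1)) := by
  have hQ : Q ∈ rowStochastic ℝ (Fin m) := mem_rowStochastic_iff_sum.2 ⟨hQ0, hQ1⟩
  have hf : ∀ e α k, p α k e ∈ Set.Icc (0 : ℝ) 1 := fun e α k =>
    Set.Ioo_subset_Icc_self (hp01 α k e)
  have hfnorm := fun e => (hμ e).fnorm_eq_one_iff hQ (hf e)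
  have hone := fun e => (hμ e).measure_hitEvent_eq_one_iff hQ (hf e) ℓ
  refine ⟨fun e => ⟨?_, ?_⟩, fun hirr => ⟨?_, ?_⟩⟩
  · rintro ⟨s, hs, hs₁⟩ t ht
    obtain ⟨α, hα⟩ := (hfnorm e s ℓ).1 hs₁
    exact (hfnorm e t ℓ).2 (exists_hitProb_eq_one_of_lt hQ (fun α k => hp01 α k e) hα hs ht)
  · rintro ⟨s, hs, hs₁⟩ t ht
    obtain ⟨α, hα⟩ := (hfnorm e s ℓ).1 hs₁
    exact (hfnorm e t ℓ).2 (exists_hitProb_eq_one_of_gt hQ (fun α k => hp01 α k e) hα hs ht)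
  · rintro ⟨α₀, i₀, hi₀, h⟩ α i hi
    simpa only [hone] using ae_hitProb_eq_one_of_lt hQ hp01 hpmeas hT.toMeasurePreserving hpT
      hirr hi₀ (by simpa only [hone] using h) α hi
  · rintro ⟨α₀, i₀, hi₀, h⟩ α i hi
    simpa only [hone] using ae_hitProb_eq_one_of_gt hQ hp01 hpmeas hT.toMeasurePreserving hpT
      hirr hi₀ (by simpa only [hone] using h) α hi

theorem stmt4_prop_time3 {m : ℕ} (hm : 0 < m)
    {E : Type*} [MeasurableSpace E] (P : Measure E) [IsProbabilityMeasure P]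
    (hPc : P.IsComplete) (T : E → E) (hT : Ergodic T P)
    (Q : Matrix (Fin m) (Fin m) ℝ)
    (hQ0 : ∀ α β, 0 ≤ Q α β) (hQ1 : ∀ α, ∑ β, Q α β = 1)
    (p : Fin m → ℤ → E → ℝ) (hpmeas : ∀ α k, Measurable (p α k))
    (hp01 : ∀ α k e, p α k e ∈ Set.Ioo (0 : ℝ) 1)
    (hpT : ∀ α k e, p α k (T e) = p α (k + 1) e)
    (μ : E → Fin m → ℤ → Measure (ℕ → Fin m × ℤ))
    (hμ : ∀ e, IsQuenchedLaw Q (fun α k => p α k e) (μ e))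
    (ℓ : ℤ) :
    (∀ e : E,
      ((∃ i < ℓ, fnorm (μ e) i ℓ = 1) → ∀ i < ℓ, fnorm (μ e) i ℓ = 1) ∧
      ((∃ i, ℓ < i ∧ fnorm (μ e) i ℓ = 1) → ∀ i, ℓ < i → fnorm (μ e) i ℓ = 1)) ∧
    (MatIrreducible Q →
      ((∃ (α : Fin m) (i : ℤ), i < ℓ ∧ ∀ᵐ e ∂P, μ e α i (hitEvent ℓ) = 1) →
        ∀ (α : Fin m) (i : ℤ), i < ℓ → ∀ᵐ e ∂P, μ e α i (hitEvent ℓ) = 1) ∧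
      ((∃ (α : Fin m) (i : ℤ), ℓ < i ∧ ∀ᵐ e ∂P, μ e α i (hitEvent ℓ) = 1) →
        ∀ (α : Fin m) (i : ℤ), ℓ < i → ∀ᵐ e ∂P, μ e α i (hitEvent ℓ) = 1)) :=
  stmt4_prop_time3_general P T hT Q hQ0 hQ1 p hpmeas hp01 hpT μ hμ ℓ

end Parrondo
end

section
/- In the rank-1 case, for every environment e, every β ∈ {1,…,m}, every α ∈ {1,…,m}, every ℓ ∈ ℤ and every i ≠ ℓ, the conditional law of the regime at the hitting time satisfies: P^e_{αi}(G_{τ_ℓ} = β | τ_ℓ < ∞) = π_β · q_{ℓ+1}^{(β)}(e)/q_{ℓ+1}(e) whenever i > ℓ, and P^e_{αi}(G_{τ_ℓ} = β | τ_ℓ < ∞) = π_β · p_{ℓ−1}^{(β)}(e)/p_{ℓ−1}(e) whenever i < ℓ. -/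
/-!
In the rank-one case the regime of every step is drawn from `π` independently of the past.
Split the event `{τ_ℓ < ∞, G_{τ_ℓ} = δ}` according to the value `n + 1` of `τ_ℓ` and the prefix
`(ω_0, …, ω_n)`: by the Markov property each piece has mass `P(prefix) · P_{ω_n, (δ, ℓ)}`.
A prefix of positive mass starting at `i` and avoiding `ℓ` moves by unit steps, so it stays on
the side of `i`, and from there it can enter `ℓ` only through the neighbour `j = ℓ ± 1` on that
side; the last step then has probability `π_δ q^{(δ)}_{ℓ+1}`, resp. `π_δ p^{(δ)}_{ℓ-1}`, whatever
the prefix. Hence `P(τ_ℓ < ∞, G_{τ_ℓ} = δ)` is this weight times a constant independent of `δ`,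
and summing over `δ` normalizes it.
-/

open MeasureTheory Filter Matrix
open scoped ENNReal Topology

namespace Parrondo

section Step

variable {ι : Type*} {Q : Matrix ι ι ℝ} {p : ι → ℤ → ℝ}

lemma step_nonneg_s9 (hQ : ∀ γ δ, 0 ≤ Q γ δ) (hp : ∀ δ x, p δ x ∈ Set.Icc (0 : ℝ) 1)
    (s s' : ι × ℤ) : 0 ≤ step Q p s s' := by
  unfold step
  refine mul_nonneg (hQ _ _) ?_
  split_ifs
  · exact (hp _ _).1
  · exact sub_nonneg.2 (hp _ _).2
  · exact le_rfl

lemma adjacent_of_step_ne_zero {s s' : ι × ℤ} (h : step Q p s s' ≠ 0) :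
    s'.2 = s.2 + 1 ∨ s'.2 = s.2 - 1 := by
  unfold step at h
  split_ifs at h with h₁ h₂
  exacts [Or.inl h₁, Or.inr h₂, absurd (mul_zero _) h]

lemma step_pos {γ δ : ι} {x y : ℤ} (hQ : 0 < Q γ δ) (hp : p δ x ∈ Set.Ioo (0 : ℝ) 1)
    (hxy : y = x + 1 ∨ y = x - 1) : 0 < step Q p (γ, x) (δ, y) := by
  unfold step
  refine mul_pos hQ ?_
  rcases hxy with rfl | rfl
  · simpa using hp.1
  · rw [if_neg (by omega), if_pos rfl]
    exact sub_pos.2 hp.2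

lemma step_add_one_self (γ δ : ι) (x : ℤ) :
    step Q p (γ, x + 1) (δ, x) = Q γ δ * (1 - p δ (x + 1)) := by
  simp [step, show x ≠ x + 1 + 1 by omega]

lemma step_sub_one_self (γ δ : ι) (x : ℤ) :
    step Q p (γ, x - 1) (δ, x) = Q γ δ * p δ (x - 1) := by
  simp [step]

lemma step_eq_of_rank_one {π : ι → ℝ} (hQ : ∀ γ δ, Q γ δ = π δ) (s s' : ι × ℤ) (γ : ι) :
    step Q p s s' = step Q p (γ, s.2) s' := by
  simp only [step, hQ]

end Step

theorem lt_iff_lt_of_unit_steps {c : ℕ → ℤ} {ℓ : ℤ} {n : ℕ}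
    (hc : ∀ k < n, c (k + 1) = c k + 1 ∨ c (k + 1) = c k - 1) (hℓ : ∀ k ≤ n, c k ≠ ℓ) :
    ℓ < c n ↔ ℓ < c 0 := by
  induction n with
  | zero => rfl
  | succ n ih =>
    rw [← ih (fun k hk => hc k (by omega)) (fun k hk => hℓ k (by omega))]
    have := hc n (by omega)
    have := hℓ n (by omega)
    have := hℓ (n + 1) le_rfl
    omega

lemma measure_div_measure_iUnion_eq_div_sum {Ω ι : Type*} [MeasurableSpace Ω] [Fintype ι]
    {ν : Measure Ω} [IsFiniteMeasure ν] {E : ι → Set Ω} (hE : ∀ δ, MeasurableSet (E δ))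
    (hdisj : Pairwise (Function.onFun Disjoint E)) {a : ι → ℝ≥0∞} {C : ℝ≥0∞}
    (hEa : ∀ δ, ν (E δ) = a δ * C) (hpos : ν (⋃ δ, E δ) ≠ 0) (β : ι) :
    ν (E β) / ν (⋃ δ, E δ) = a β / ∑ δ, a δ := by
  have hU : ν (⋃ δ, E δ) = (∑ δ, a δ) * C := by
    rw [measure_iUnion hdisj hE, tsum_fintype, Finset.sum_mul]
    exact Finset.sum_congr rfl fun δ _ => hEa δ
  have hCtop : C ≠ ⊤ := fun h => measure_ne_top ν (⋃ δ, E δ) <| by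
    rw [hU, h, ENNReal.mul_top (left_ne_zero_of_mul (hU ▸ hpos))]
  rw [hU] at hpos ⊢
  rw [hEa, ENNReal.mul_div_mul_right _ _ (right_ne_zero_of_mul hpos) hCtop]

lemma ofReal_div_sum_ofReal {ι : Type*} [Fintype ι] {w : ι → ℝ} (hw : ∀ δ, 0 < w δ) (β : ι) :
    ENNReal.ofReal (w β) / ∑ δ, ENNReal.ofReal (w δ) = ENNReal.ofReal (w β / ∑ δ, w δ) := by
  rw [← ENNReal.ofReal_sum_of_nonneg fun δ _ => (hw δ).le,
    ENNReal.ofReal_div_of_pos (Finset.sum_pos (fun δ _ => hw δ) ⟨β, Finset.mem_univ β⟩)]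

section Events

open Preorder (frestrictLe measurable_frestrictLe)

variable {ι : Type*}

def firstHitAt (ℓ : ℤ) (β : ι) (n : ℕ) : Set (ℕ → ι × ℤ) :=
  {ω | ω n = (β, ℓ) ∧ ∀ k, 1 ≤ k → k < n → (ω k).2 ≠ ℓ}

def avoidingPrefixes (ℓ : ℤ) (n : ℕ) : Set (Finset.Iic n → ι × ℤ) :=
  {d | ∀ k : Finset.Iic n, 1 ≤ (k : ℕ) → (d k).2 ≠ ℓ}

lemma hitRegimeEvent_eq_iUnion_firstHitAt (ℓ : ℤ) (β : ι) :
    hitRegimeEvent ℓ β = ⋃ n : ℕ, firstHitAt ℓ β (n + 1) := by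
  ext ω
  simp only [hitRegimeEvent, firstHitAt, Set.mem_ofPred_eq, Set.mem_iUnion, Prod.ext_iff]
  constructor
  · rintro ⟨n, hn, hℓ, hβ, hfirst⟩
    obtain ⟨n, rfl⟩ := Nat.exists_eq_add_of_le' hn
    exact ⟨n, ⟨hβ, hℓ⟩, hfirst⟩
  · rintro ⟨n, ⟨hβ, hℓ⟩, hfirst⟩
    exact ⟨n + 1, by omega, hℓ, hβ, hfirst⟩

lemma firstHitAt_disjoint {ℓ : ℤ} {β β' : ι} {n n' : ℕ} (hn : 1 ≤ n) (hn' : 1 ≤ n')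
    (h : n ≠ n' ∨ β ≠ β') : Disjoint (firstHitAt ℓ β n) (firstHitAt ℓ β' n') := by
  refine Set.disjoint_left.2 fun ω ⟨hω, hfirst⟩ ⟨hω', hfirst'⟩ => ?_
  rcases lt_trichotomy n n' with hlt | rfl | hlt
  · exact hfirst' n hn hlt (by rw [hω])
  · exact h.resolve_left (not_not.2 rfl) (by simpa [hω] using hω')
  · exact hfirst n' hn' hlt (by rw [hω'])

lemma pairwise_disjoint_firstHitAt (ℓ : ℤ) (β : ι) :
    Pairwise (Function.onFun Disjoint fun n : ℕ => firstHitAt ℓ β (n + 1)) :=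
  fun n n' h => firstHitAt_disjoint (by omega) (by omega) (Or.inl (by omega))

lemma pairwise_disjoint_hitRegimeEvent (ℓ : ℤ) :
    Pairwise (Function.onFun Disjoint (hitRegimeEvent (ι := ι) ℓ)) := by
  intro β β' h
  simp only [Function.onFun, hitRegimeEvent_eq_iUnion_firstHitAt, Set.disjoint_iUnion_left,
    Set.disjoint_iUnion_right]
  exact fun n n' => firstHitAt_disjoint (by omega) (by omega) (Or.inr h)

lemma hitEvent_eq_iUnion_hitRegimeEvent (ℓ : ℤ) :
    hitEvent ℓ = ⋃ β : ι, hitRegimeEvent ℓ β := by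
  classical
  ext ω
  simp only [Set.mem_iUnion]
  constructor
  · intro hhit
    obtain ⟨hn, hℓ⟩ := Nat.find_spec hhit
    exact ⟨_, Nat.find hhit, hn, hℓ, rfl, fun k hk hlt hkℓ => Nat.find_min hhit hlt ⟨hk, hkℓ⟩⟩
  · rintro ⟨β, n, hn, hℓ, -⟩
    exact ⟨n, hn, hℓ⟩

lemma firstHitAt_succ_eq (ℓ : ℤ) (β : ι) (n : ℕ) :
    firstHitAt ℓ β (n + 1) =
      frestrictLe n ⁻¹' avoidingPrefixes ℓ n ∩ {ω | ω (n + 1) = (β, ℓ)} := by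
  ext ω
  simp only [firstHitAt, avoidingPrefixes, Set.mem_inter_iff, Set.mem_preimage, Set.mem_ofPred_eq,
    Preorder.frestrictLe_apply, Subtype.forall, Finset.mem_Iic, Nat.lt_succ_iff]
  tauto

lemma measurableSet_firstHitAt_succ [MeasurableSpace ι] [MeasurableSingletonClass ι] [Countable ι]
    (ℓ : ℤ) (β : ι) (n : ℕ) : MeasurableSet (firstHitAt ℓ β (n + 1)) := by
  rw [firstHitAt_succ_eq]
  exact (measurable_frestrictLe n MeasurableSet.of_discrete).inter
    (measurable_pi_apply (n + 1) (measurableSet_singleton _))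

lemma measurableSet_hitRegimeEvent [MeasurableSpace ι] [MeasurableSingletonClass ι] [Countable ι]
    (ℓ : ℤ) (β : ι) : MeasurableSet (hitRegimeEvent ℓ β) := by
  rw [hitRegimeEvent_eq_iUnion_firstHitAt]
  exact MeasurableSet.iUnion (measurableSet_firstHitAt_succ ℓ β)

end Events

section Cylinder

open Preorder (frestrictLe)

variable {σ : Type*}

lemma preimage_frestrictLe_singleton (n : ℕ) (c : ℕ → σ) :
    frestrictLe n ⁻¹' ({frestrictLe n c} : Set (Finset.Iic n → σ)) =
      {ω : ℕ → σ | ∀ k ≤ n, ω k = c k} := by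
  ext ω
  simp [funext_iff]

lemma exists_frestrictLe_eq (n : ℕ) (d : Finset.Iic n → σ) (s : σ) :
    ∃ c : ℕ → σ, frestrictLe n c = d ∧ c (n + 1) = s :=
  ⟨fun k => if h : k ≤ n then d ⟨k, Finset.mem_Iic.2 h⟩ else s,
    by ext ⟨k, hk⟩; simp [Finset.mem_Iic.1 hk], by simp⟩

end Cylinder

section QuenchedLaw

open Preorder (frestrictLe measurable_frestrictLe)

variable {ι : Type*} [DecidableEq ι] [MeasurableSpace ι] {Q : Matrix ι ι ℝ} {p : ι → ℤ → ℝ}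
  {μ : ι → ℤ → Measure (ℕ → ι × ℤ)}

lemma IsQuenchedLaw.measure_cylinder_inter_eq_mul (hμ : IsQuenchedLaw Q p μ)
    (hstep : ∀ s s', 0 ≤ step Q p s s') (α : ι) (i : ℤ) (n : ℕ) (c : ℕ → ι × ℤ) :
    μ α i ({ω | ∀ k ≤ n, ω k = c k} ∩ {ω | ω (n + 1) = c (n + 1)}) =
      μ α i {ω | ∀ k ≤ n, ω k = c k} * ENNReal.ofReal (step Q p (c n) (c (n + 1))) := by
  have hset : {ω | ∀ k ≤ n, ω k = c k} ∩ {ω | ω (n + 1) = c (n + 1)} =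
      {ω : ℕ → ι × ℤ | ∀ k ≤ n + 1, ω k = c k} := by
    ext ω
    simp only [Set.mem_inter_iff, Set.mem_ofPred_eq, Nat.le_succ_iff, or_imp, forall_and,
      forall_eq]
  rw [hset, (hμ α i).2, (hμ α i).2, Finset.prod_range_succ, ENNReal.ofReal_mul' (hstep _ _),
    mul_assoc]

lemma IsQuenchedLaw.step_ne_zero_of_measure_cylinder_ne_zero (hμ : IsQuenchedLaw Q p μ)
    {α : ι} {i : ℤ} {n : ℕ} {c : ℕ → ι × ℤ} (h : μ α i {ω | ∀ k ≤ n, ω k = c k} ≠ 0) :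
    c 0 = (α, i) ∧ ∀ k < n, step Q p (c k) (c (k + 1)) ≠ 0 := by
  rw [(hμ α i).2] at h
  split_ifs at h with h0
  · refine ⟨h0, fun k hk => ?_⟩
    rw [one_mul, ne_eq, ENNReal.ofReal_eq_zero, not_le] at h
    exact Finset.prod_ne_zero_iff.1 h.ne' k (Finset.mem_range.2 hk)
  · simp at h

lemma IsQuenchedLaw.measure_hitEvent_ne_zero (hμ : IsQuenchedLaw Q p μ) {α : ι}
    (hQ : 0 < Q α α) (hp : ∀ x, p α x ∈ Set.Ioo (0 : ℝ) 1) {ℓ i : ℤ} (hne : i ≠ ℓ) :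
    μ α i (hitEvent ℓ) ≠ 0 := by
  obtain ⟨s, hs, N, hN, hNℓ⟩ : ∃ s : ℤ, (s = 1 ∨ s = -1) ∧ ∃ N : ℕ, 1 ≤ N ∧ i + N * s = ℓ := by
    rcases hne.lt_or_gt with h | h
    · exact ⟨1, Or.inl rfl, (ℓ - i).toNat, by omega, by omega⟩
    · exact ⟨-1, Or.inr rfl, (i - ℓ).toNat, by omega, by omega⟩
  set c : ℕ → ι × ℤ := fun k => (α, i + k * s)
  have hsub : {ω | ∀ k ≤ N, ω k = c k} ⊆ hitEvent ℓ :=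
    fun ω hω => ⟨N, hN, by rw [hω N le_rfl]; exact hNℓ⟩
  intro h0
  have hcyl := measure_mono_null hsub h0
  rw [(hμ α i).2, if_pos (by simp [c]), one_mul, ENNReal.ofReal_eq_zero] at hcyl
  refine (Finset.prod_pos fun k _ => step_pos hQ (hp _) ?_).not_ge hcyl
  push_cast
  rcases hs with rfl | rfl <;> omega

lemma IsQuenchedLaw.measure_preimage_inter_eq_tsum [MeasurableSingletonClass ι] [Countable ι]
    (hμ : IsQuenchedLaw Q p μ) (hstep : ∀ s s', 0 ≤ step Q p s s') (α : ι) (i : ℤ) (n : ℕ)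
    (A : Set (Finset.Iic n → ι × ℤ)) (s : ι × ℤ) :
    μ α i (frestrictLe n ⁻¹' A ∩ {ω | ω (n + 1) = s}) =
      ∑' d : A, μ α i (frestrictLe n ⁻¹' {d.1}) *
        ENNReal.ofReal (step Q p (d.1 ⟨n, Finset.mem_Iic.2 le_rfl⟩) s) := by
  rw [← Measure.restrict_apply (measurable_frestrictLe n MeasurableSet.of_discrete),
    ← tsum_measure_preimage_singleton A.to_countable
      (fun d _ => measurable_frestrictLe n (measurableSet_singleton d))]
  refine tsum_congr fun ⟨d, _⟩ => ?_
  obtain ⟨c, rfl, rfl⟩ := exists_frestrictLe_eq n d s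
  rw [Measure.restrict_apply (measurable_frestrictLe n (measurableSet_singleton _)),
    preimage_frestrictLe_singleton, hμ.measure_cylinder_inter_eq_mul hstep]
  rfl

end QuenchedLaw

section FirstHit

open Preorder (frestrictLe measurable_frestrictLe)

variable {ι : Type*} [DecidableEq ι] [MeasurableSpace ι] {Q : Matrix ι ι ℝ} {p : ι → ℤ → ℝ}
  {μ : ι → ℤ → Measure (ℕ → ι × ℤ)}

lemma IsQuenchedLaw.measure_cylinder_mul_step_eq (hμ : IsQuenchedLaw Q p μ) {π : ι → ℝ}
    (hQ : ∀ γ δ, Q γ δ = π δ) {ℓ i j : ℤ} (hj : ℓ < i ∧ j = ℓ + 1 ∨ i < ℓ ∧ j = ℓ - 1)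
    (α δ : ι) {n : ℕ} {c : ℕ → ι × ℤ} (hc : ∀ k, 1 ≤ k → k ≤ n → (c k).2 ≠ ℓ) :
    μ α i {ω | ∀ k ≤ n, ω k = c k} * ENNReal.ofReal (step Q p (c n) (δ, ℓ)) =
      ENNReal.ofReal (step Q p (α, j) (δ, ℓ)) *
        if (c n).2 = j then μ α i {ω | ∀ k ≤ n, ω k = c k} else 0 := by
  by_cases h0 : μ α i {ω | ∀ k ≤ n, ω k = c k} = 0
  · simp [h0]
  obtain ⟨hc0, hsteps⟩ := hμ.step_ne_zero_of_measure_cylinder_ne_zero h0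
  have hside : ℓ < (c n).2 ↔ ℓ < i := by
    rw [lt_iff_lt_of_unit_steps (c := fun k => (c k).2)
      (fun k hk => adjacent_of_step_ne_zero (hsteps k hk)) fun k hk => ?_, hc0]
    rcases Nat.eq_zero_or_pos k with rfl | hk0
    · rw [hc0]; omega
    · exact hc k hk0 hk
  split_ifs with hcj
  · rw [step_eq_of_rank_one hQ (c n) (δ, ℓ) α, hcj, mul_comm]
  · have hstep : step Q p (c n) (δ, ℓ) = 0 := by
      by_contra h
      have := adjacent_of_step_ne_zero h
      rcases Nat.eq_zero_or_pos n with rfl | hn0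
      · rw [hc0] at this hcj; omega
      · have := hc n hn0 le_rfl; omega
    simp [hstep]

theorem IsQuenchedLaw.exists_measure_hitRegimeEvent_eq_mul [MeasurableSingletonClass ι]
    [Countable ι] (hμ : IsQuenchedLaw Q p μ) {π : ι → ℝ} (hQ : ∀ γ δ, Q γ δ = π δ)
    (hstep : ∀ s s', 0 ≤ step Q p s s') {ℓ i j : ℤ}
    (hj : ℓ < i ∧ j = ℓ + 1 ∨ i < ℓ ∧ j = ℓ - 1) (α : ι) :
    ∃ C : ℝ≥0∞, ∀ δ,
      μ α i (hitRegimeEvent ℓ δ) = ENNReal.ofReal (step Q p (α, j) (δ, ℓ)) * C := by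
  refine ⟨∑' (n : ℕ) (d : avoidingPrefixes ℓ n),
    if (d.1 ⟨n, Finset.mem_Iic.2 le_rfl⟩).2 = j then μ α i (frestrictLe n ⁻¹' {d.1}) else 0,
    fun δ => ?_⟩
  rw [hitRegimeEvent_eq_iUnion_firstHitAt, measure_iUnion (pairwise_disjoint_firstHitAt ℓ δ)
    (measurableSet_firstHitAt_succ ℓ δ), ← ENNReal.tsum_mul_left]
  refine tsum_congr fun n => ?_
  rw [firstHitAt_succ_eq, hμ.measure_preimage_inter_eq_tsum hstep, ← ENNReal.tsum_mul_left]
  refine tsum_congr fun ⟨d, hd⟩ => ?_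
  obtain ⟨c, rfl, -⟩ := exists_frestrictLe_eq n d (δ, ℓ)
  simp only [preimage_frestrictLe_singleton]
  exact hμ.measure_cylinder_mul_step_eq hQ hj α δ fun k hk hkn => hd ⟨k, Finset.mem_Iic.2 hkn⟩ hk

theorem IsQuenchedLaw.measure_hitRegimeEvent_inter_div_eq [Fintype ι]
    [MeasurableSingletonClass ι] (hμ : IsQuenchedLaw Q p μ) {π : ι → ℝ}
    (hQ : ∀ γ δ, Q γ δ = π δ) (hstep : ∀ s s', 0 ≤ step Q p s s') {ℓ i j : ℤ}
    (hj : ℓ < i ∧ j = ℓ + 1 ∨ i < ℓ ∧ j = ℓ - 1) {α : ι} (hhit : μ α i (hitEvent ℓ) ≠ 0)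
    (β : ι) :
    μ α i (hitRegimeEvent ℓ β ∩ hitEvent ℓ) / μ α i (hitEvent ℓ) =
      ENNReal.ofReal (step Q p (α, j) (β, ℓ)) / ∑ δ, ENNReal.ofReal (step Q p (α, j) (δ, ℓ)) := by
  obtain ⟨C, hC⟩ := hμ.exists_measure_hitRegimeEvent_eq_mul hQ hstep hj α
  have : IsProbabilityMeasure (μ α i) := (hμ α i).1
  rw [hitEvent_eq_iUnion_hitRegimeEvent] at hhit ⊢
  rw [Set.inter_eq_left.2 (Set.subset_iUnion _ β)]
  exact measure_div_measure_iUnion_eq_div_sum (measurableSet_hitRegimeEvent ℓ)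
    (pairwise_disjoint_hitRegimeEvent ℓ) hC hhit β

end FirstHit

theorem stmt9_hitting_regime_rank1_general {m : ℕ}
    (π : Fin m → ℝ) (hπpos : ∀ β, 0 < π β) (hπsum : ∑ β, π β = 1)
    (Q : Matrix (Fin m) (Fin m) ℝ) (hQ : ∀ α β, Q α β = π β)
    (p : Fin m → ℤ → ℝ) (hp : ∀ α k, p α k ∈ Set.Ioo (0 : ℝ) 1)
    (μ : Fin m → ℤ → Measure (ℕ → Fin m × ℤ)) (hμ : IsQuenchedLaw Q p μ)
    (pb : ℤ → ℝ) (hpb : ∀ i, pb i = ∑ β, π β * p β i) :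
    ∀ (β α : Fin m) (ℓ i : ℤ), i ≠ ℓ →
      (ℓ < i →
        μ α i (hitRegimeEvent ℓ β ∩ hitEvent ℓ) / μ α i (hitEvent ℓ) =
          ENNReal.ofReal (π β * (1 - p β (ℓ + 1)) / (1 - pb (ℓ + 1)))) ∧
      (i < ℓ →
        μ α i (hitRegimeEvent ℓ β ∩ hitEvent ℓ) / μ α i (hitEvent ℓ) =
          ENNReal.ofReal (π β * p β (ℓ - 1) / pb (ℓ - 1))) := by
  intro β α ℓ i hne
  have hstep : ∀ s s', 0 ≤ step Q p s s' := step_nonneg_s9 (fun γ δ => hQ γ δ ▸ (hπpos δ).le)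
    fun δ x => Set.Ioo_subset_Icc_self (hp δ x)
  have hhit := hμ.measure_hitEvent_ne_zero (hQ α α ▸ hπpos α) (hp α) hne
  refine ⟨fun hlt => ?_, fun hlt => ?_⟩
  · have hsum : ∑ δ, π δ * (1 - p δ (ℓ + 1)) = 1 - pb (ℓ + 1) := by
      simp [mul_sub, Finset.sum_sub_distrib, hπsum, hpb]
    rw [hμ.measure_hitRegimeEvent_inter_div_eq hQ hstep (Or.inl ⟨hlt, rfl⟩) hhit]
    simp only [step_add_one_self, hQ]
    rw [ofReal_div_sum_ofReal fun δ => mul_pos (hπpos δ) (sub_pos.2 (hp δ _).2), hsum]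
  · rw [hμ.measure_hitRegimeEvent_inter_div_eq hQ hstep (Or.inr ⟨hlt, rfl⟩) hhit]
    simp only [step_sub_one_self, hQ]
    rw [ofReal_div_sum_ofReal fun δ => mul_pos (hπpos δ) (hp δ _).1, hpb]

theorem stmt9_hitting_regime_rank1 {m : ℕ} (hm : 0 < m)
    (π : Fin m → ℝ) (hπpos : ∀ β, 0 < π β) (hπsum : ∑ β, π β = 1)
    (Q : Matrix (Fin m) (Fin m) ℝ) (hQ : ∀ α β, Q α β = π β)
    (p : Fin m → ℤ → ℝ) (hp : ∀ α k, p α k ∈ Set.Ioo (0 : ℝ) 1)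
    (μ : Fin m → ℤ → Measure (ℕ → Fin m × ℤ)) (hμ : IsQuenchedLaw Q p μ)
    (pb : ℤ → ℝ) (hpb : ∀ i, pb i = ∑ β, π β * p β i) :
    ∀ (β α : Fin m) (ℓ i : ℤ), i ≠ ℓ →
      (ℓ < i →
        μ α i (hitRegimeEvent ℓ β ∩ hitEvent ℓ) / μ α i (hitEvent ℓ) =
          ENNReal.ofReal (π β * (1 - p β (ℓ + 1)) / (1 - pb (ℓ + 1)))) ∧
      (i < ℓ →
        μ α i (hitRegimeEvent ℓ β ∩ hitEvent ℓ) / μ α i (hitEvent ℓ) =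
          ENNReal.ofReal (π β * p β (ℓ - 1) / pb (ℓ - 1))) :=
  stmt9_hitting_regime_rank1_general π hπpos hπsum Q hQ p hp μ hμ pb hpb

end Parrondo
end

section
/- Let (σ_i)_{i≥1} be a stationary ergodic sequence of strictly positive random variables with E|log σ_1| < ∞ and set u = E(log σ_1). Define U_n = σ_1 + σ_1σ_2 + ⋯ + σ_1σ_2⋯σ_n and s_n = σ_1σ_2⋯σ_n. Then almost surely (1/n)·log U_n → max(0, u) and (1/n)·log((1+U_n)/s_n) → max(0, −u) as n → ∞. -/
open MeasureTheory Filter Matrix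
open scoped ENNReal Topology

/-!
By Birkhoff's theorem `log s_n = n u + o(n)`. Every term `s_k`, `k ≤ n`, of `U_n` is therefore at
most `exp (n (max 0 u + o(1)))`, while `U_n ≥ max (s_1, s_n)`; hence `log U_n / n → max 0 u`, and
`log ((1 + U_n) / s_n) = log (1 + U_n) - log s_n` gives the second limit.

Birkhoff's theorem is derived from the maximal ergodic theorem `∫_{sup_n S_n h > 0} h ≥ 0`: if
`∫ h < 0`, the set where the Birkhoff sums `S_n h` are unbounded above is invariant, so by
ergodicity it is null or conull, and conull would make `∫ h` itself nonnegative.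
-/

open Real Finset

section MaximalErgodic

variable {Ω : Type*} {T : Ω → Ω} {g : Ω → ℝ}

/-- `maxBirkhoffSum T g n x = max 0 (max_{1 ≤ k ≤ n} birkhoffSum T g k x)`. -/
noncomputable def maxBirkhoffSum (T : Ω → Ω) (g : Ω → ℝ) : ℕ → Ω → ℝ
  | 0 => 0
  | n + 1 => fun x => max 0 (g x + maxBirkhoffSum T g n (T x))

lemma maxBirkhoffSum_nonneg (T : Ω → Ω) (g : Ω → ℝ) : ∀ n x, 0 ≤ maxBirkhoffSum T g n x
  | 0, _ => le_rfl
  | _ + 1, _ => le_max_left _ _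

lemma maxBirkhoffSum_mono (T : Ω → Ω) (g : Ω → ℝ) : Monotone (maxBirkhoffSum T g) := by
  refine monotone_nat_of_le_succ fun n => ?_
  induction n with
  | zero => exact maxBirkhoffSum_nonneg T g 1
  | succ n ih => exact fun x => max_le_max le_rfl (add_le_add le_rfl (ih (T x)))

lemma birkhoffSum_le_maxBirkhoffSum (T : Ω → Ω) (g : Ω → ℝ) :
    ∀ n x, birkhoffSum T g n x ≤ maxBirkhoffSum T g n x
  | 0, x => by simp [maxBirkhoffSum]
  | n + 1, x => by
    rw [birkhoffSum_succ']
    exact (add_le_add le_rfl (birkhoffSum_le_maxBirkhoffSum T g n (T x))).trans (le_max_right _ _)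

lemma maxBirkhoffSum_le_max (T : Ω → Ω) (g : Ω → ℝ) (n : ℕ) (x : Ω) :
    maxBirkhoffSum T g n x ≤ max 0 (g x + maxBirkhoffSum T g n (T x)) :=
  maxBirkhoffSum_mono T g n.le_succ x

variable [MeasurableSpace Ω] {μ : Measure Ω}

lemma measurable_birkhoffSum (hT : Measurable T) (hg : Measurable g) (n : ℕ) :
    Measurable (birkhoffSum T g n) :=
  Finset.measurable_sum _ fun k _ => hg.comp (hT.iterate k)

lemma measurable_maxBirkhoffSum (hT : Measurable T) (hg : Measurable g) :
    ∀ n, Measurable (maxBirkhoffSum T g n)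
  | 0 => measurable_const
  | n + 1 => measurable_const.max (hg.add ((measurable_maxBirkhoffSum hT hg n).comp hT))

lemma integrable_maxBirkhoffSum [IsFiniteMeasure μ] (hT : MeasurePreserving T μ μ)
    (hg : Integrable g μ) : ∀ n, Integrable (maxBirkhoffSum T g n) μ
  | 0 => integrable_zero _ _ _
  | n + 1 => (integrable_const 0).sup
      (hg.add (hT.integrable_comp_of_integrable (integrable_maxBirkhoffSum hT hg n)))

theorem setIntegral_maxBirkhoffSum_pos_nonneg [IsFiniteMeasure μ]
    (hT : MeasurePreserving T μ μ) (hg : Measurable g) (hgi : Integrable g μ) :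
    0 ≤ ∫ x in {x | ∃ n, 0 < maxBirkhoffSum T g n x}, g x ∂μ := by
  set A : ℕ → Set Ω := fun n => {x | 0 < maxBirkhoffSum T g n x}
  have hA : ∀ n, MeasurableSet (A n) := fun n =>
    measurableSet_lt measurable_const (measurable_maxBirkhoffSum hT.measurable hg n)
  have hAmono : Monotone A := fun m n hmn x (hx : 0 < _) =>
    hx.trans_le (maxBirkhoffSum_mono T g hmn x)
  have hstep : ∀ n, 0 ≤ ∫ x in A n, g x ∂μ := by
    intro n
    set M := maxBirkhoffSum T g n
    have hM : Integrable M μ := integrable_maxBirkhoffSum hT hgi n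
    have hMT : Integrable (M ∘ T) μ := hT.integrable_comp_of_integrable hM
    have hcomp : ∫ x, M (T x) ∂μ = ∫ x, M x ∂μ := by
      rw [← integral_map_of_stronglyMeasurable hT.measurable
        (measurable_maxBirkhoffSum hT.measurable hg n).stronglyMeasurable, hT.map_eq]
    have hoff : ∫ x in A n, M x ∂μ = ∫ x, M x ∂μ :=
      setIntegral_eq_integral_of_forall_compl_eq_zero fun x hx =>
        le_antisymm (not_lt.1 hx) (maxBirkhoffSum_nonneg T g n x)
    have hon : ∀ x ∈ A n, M x - M (T x) ≤ g x := fun x (hx : 0 < M x) => by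
      rcases le_max_iff.1 (maxBirkhoffSum_le_max T g n x) with h | h
      · exact absurd hx h.not_gt
      · linarith
    calc 0 = ∫ x, M x ∂μ - ∫ x, M (T x) ∂μ := by rw [hcomp, sub_self]
      _ ≤ ∫ x in A n, M x ∂μ - ∫ x in A n, M (T x) ∂μ := by
        rw [hoff]
        exact sub_le_sub_left (setIntegral_le_integral hMT
          (ae_of_all _ fun x => maxBirkhoffSum_nonneg T g n (T x))) _
      _ = ∫ x in A n, (M x - M (T x)) ∂μ := (integral_sub hM.integrableOn hMT.integrableOn).symm
      _ ≤ ∫ x in A n, g x ∂μ :=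
        setIntegral_mono_on (hM.sub hMT).integrableOn hgi.integrableOn (hA n) hon
  have hlim := tendsto_setIntegral_of_monotone hA hAmono hgi.integrableOn
  rw [← Set.ofPred_exists] at hlim
  exact ge_of_tendsto' hlim hstep

end MaximalErgodic

section Birkhoff

variable {Ω : Type*} [MeasurableSpace Ω] {μ : Measure Ω} {T : Ω → Ω} {g : Ω → ℝ}

theorem Ergodic.ae_bddAbove_birkhoffSum [IsFiniteMeasure μ] (hT : Ergodic T μ) (hg : Measurable g)
    (hgi : Integrable g μ) (hneg : ∫ x, g x ∂μ < 0) :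
    ∀ᵐ x ∂μ, BddAbove (Set.range fun n => birkhoffSum T g n x) := by
  set F := {x | BddAbove (Set.range fun n => birkhoffSum T g n x)}
  have hF : MeasurableSet F :=
    measurableSet_bddAbove_range (measurable_birkhoffSum hT.measurable hg)
  have hFinv : T ⁻¹' F = F := by
    ext x
    simp only [F, Set.mem_preimage, Set.mem_ofPred_eq, bddAbove_def, Set.forall_mem_range]
    constructor
    · rintro ⟨C, hC⟩
      refine ⟨max 0 (g x + C), fun n => ?_⟩
      cases n with
      | zero => simp
      | succ n =>
        exact (birkhoffSum_succ' T g n x).trans_le (le_max_of_le_right (by linarith [hC n]))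
    · rintro ⟨C, hC⟩
      exact ⟨C - g x, fun n => by linarith [hC (n + 1), birkhoffSum_succ' T g n x]⟩
  refine eventuallyEq_univ.1 <| (hT.ae_empty_or_univ hF hFinv).resolve_left fun hF0 => ?_
  have hA : {x | ∃ n, 0 < maxBirkhoffSum T g n x} =ᵐ[μ] Set.univ := by
    refine eventuallyEq_univ.2 ?_
    filter_upwards [measure_eq_zero_iff_ae_notMem.1 (ae_eq_empty.1 hF0)] with x hx
    obtain ⟨n, hn⟩ : ∃ n, 0 < birkhoffSum T g n x := by
      simp only [F, Set.mem_ofPred_eq, bddAbove_def, Set.forall_mem_range, not_exists,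
        not_forall, not_le] at hx
      exact hx 0
    exact ⟨n, hn.trans_le (birkhoffSum_le_maxBirkhoffSum T g n x)⟩
  have hmax := setIntegral_maxBirkhoffSum_pos_nonneg hT.toMeasurePreserving hg hgi
  rw [Measure.restrict_congr_set hA, Measure.restrict_univ] at hmax
  exact hneg.not_ge hmax

theorem Ergodic.ae_eventually_birkhoffAverage_lt [IsProbabilityMeasure μ] (hT : Ergodic T μ)
    (hg : Measurable g) (hgi : Integrable g μ) :
    ∀ᵐ x ∂μ, ∀ c, ∫ y, g y ∂μ < c → ∀ᶠ n in atTop, birkhoffAverage ℝ T g n x < c := by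
  -- rational thresholds, so that a single null set serves every `c`
  have hbdd : ∀ᵐ x ∂μ, ∀ q : ℚ, ∫ y, g y ∂μ < q →
      BddAbove (Set.range fun n => birkhoffSum T (fun y => g y - q) n x) := by
    refine ae_all_iff.2 fun q => ?_
    by_cases hq : ∫ y, g y ∂μ < q
    · filter_upwards [hT.ae_bddAbove_birkhoffSum (hg.sub measurable_const)
        (hgi.sub (integrable_const _)) (by simpa [integral_sub hgi (integrable_const _)])]
        with x hx _ using hx
    · exact ae_of_all _ fun x h => absurd h hq
  filter_upwards [hbdd] with x hx c hc
  obtain ⟨q, hgq, hqc⟩ := exists_rat_btwn hc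
  obtain ⟨C, hC⟩ := hx q hgq
  have hlim : Tendsto (fun n : ℕ => C / n + q) atTop (𝓝 (0 + q)) :=
    (tendsto_const_div_atTop_nhds_zero_nat C).add_const _
  filter_upwards [hlim.eventually (gt_mem_nhds (by simpa using hqc)), eventually_gt_atTop 0]
    with n hn hn0
  refine lt_of_le_of_lt ?_ hn
  have hSn : birkhoffSum T g n x - n * q ≤ C := by
    simpa [birkhoffSum, Finset.sum_sub_distrib] using hC ⟨n, rfl⟩
  have hn0' : (0 : ℝ) < n := Nat.cast_pos.2 hn0
  rw [birkhoffAverage, smul_eq_mul, inv_mul_le_iff₀ hn0', mul_add, mul_div_cancel₀ _ hn0'.ne']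
  linarith

theorem Ergodic.ae_tendsto_birkhoffAverage [IsProbabilityMeasure μ] (hT : Ergodic T μ)
    (hg : Measurable g) (hgi : Integrable g μ) :
    ∀ᵐ x ∂μ, Tendsto (birkhoffAverage ℝ T g · x) atTop (𝓝 (∫ y, g y ∂μ)) := by
  filter_upwards [hT.ae_eventually_birkhoffAverage_lt hg hgi,
    hT.ae_eventually_birkhoffAverage_lt hg.neg hgi.neg] with x hup hlow
  refine tendsto_order.2 ⟨fun c hc => ?_, hup⟩
  filter_upwards [hlow (-c) (by simpa [integral_neg] using hc)] with n hn
  simpa [birkhoffAverage_neg] using hn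

end Birkhoff

section LogSumExp

variable {ι : Type*} {s : Finset ι} {f : ι → ℝ} {c : ℝ}

lemma le_log_add_sum_exp (hc : 0 ≤ c) {k : ι} (hk : k ∈ s) :
    f k ≤ log (c + ∑ i ∈ s, exp (f i)) := by
  have hterm : exp (f k) ≤ ∑ i ∈ s, exp (f i) :=
    single_le_sum (fun i _ => (exp_pos (f i)).le) hk
  rw [le_log_iff_exp_le (by linarith [exp_pos (f k)])]
  linarith

lemma log_add_sum_exp_le (hs : s.Nonempty) {a : ℝ} (hc : 0 ≤ c) (ha : 0 ≤ a)
    (hf : ∀ i ∈ s, f i ≤ a) :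
    log (c + ∑ i ∈ s, exp (f i)) ≤ log (c + #s) + a := by
  have hsum : ∑ i ∈ s, exp (f i) ≤ #s * exp a := by
    simpa using sum_le_card_nsmul s _ _ fun i hi => exp_le_exp.2 (hf i hi)
  have hpos : 0 < c + ∑ i ∈ s, exp (f i) :=
    add_pos_of_nonneg_of_pos hc (sum_pos (fun i _ => exp_pos _) hs)
  have hcs : (0 : ℝ) < c + #s := by
    have : (0 : ℝ) < #s := Nat.cast_pos.2 hs.card_pos
    linarith
  calc log (c + ∑ i ∈ s, exp (f i)) ≤ log ((c + #s) * exp a) :=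
        log_le_log hpos (by nlinarith [one_le_exp ha])
    _ = log (c + #s) + a := by rw [log_mul hcs.ne' (exp_pos a).ne', log_exp]

lemma tendsto_log_add_natCast_div_atTop (c : ℝ) :
    Tendsto (fun n : ℕ => log (c + n) / n) atTop (𝓝 0) := by
  refine ((tendsto_pow_log_div_mul_add_atTop 1 (-c) 1 one_ne_zero).comp
    (tendsto_atTop_add_const_left _ c tendsto_natCast_atTop_atTop)).congr fun n => ?_
  simp

lemma exists_le_add_mul_of_tendsto_div {x : ℕ → ℝ} {u b : ℝ}
    (hx : Tendsto (fun n : ℕ => x n / n) atTop (𝓝 u)) (hub : u < b) :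
    ∃ C, 0 ≤ C ∧ ∀ n, x n ≤ C + b * n := by
  obtain ⟨C, hC⟩ : BddAbove (Set.range fun n => x n - b * n) := by
    refine (isBoundedUnder_of_eventually_le (a := 0) ?_).bddAbove_range
    filter_upwards [hx.eventually (gt_mem_nhds hub), eventually_gt_atTop 0] with n hn hn0
    rw [div_lt_iff₀ (Nat.cast_pos.2 hn0)] at hn
    linarith
  exact ⟨max C 0, le_max_right _ _, fun n => by linarith [hC ⟨n, rfl⟩, le_max_left C 0]⟩

theorem tendsto_log_add_sum_exp_div {x : ℕ → ℝ} {u : ℝ} (hc : 0 ≤ c)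
    (hx : Tendsto (fun n : ℕ => x n / n) atTop (𝓝 u)) :
    Tendsto (fun n : ℕ => log (c + ∑ k ∈ range n, exp (x (k + 1))) / n) atTop
      (𝓝 (max 0 u)) := by
  refine tendsto_order.2 ⟨fun a ha => ?_, fun a ha => ?_⟩
  · have hends := (tendsto_const_div_atTop_nhds_zero_nat (x 1)).max hx
    filter_upwards [hends.eventually (lt_mem_nhds ha), eventually_ge_atTop 1] with n hn hn1
    have hfirst := le_log_add_sum_exp (f := fun k => x (k + 1)) hc (mem_range.2 hn1)
    have hlast := le_log_add_sum_exp (f := fun k => x (k + 1)) hc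
      (mem_range.2 (Nat.sub_lt hn1 one_pos))
    rw [Nat.sub_add_cancel hn1] at hlast
    exact hn.trans_le (max_le (by gcongr) (by gcongr))
  · obtain ⟨b, hub, hba⟩ := exists_between ha
    obtain ⟨C, hC0, hC⟩ := exists_le_add_mul_of_tendsto_div hx ((le_max_right _ _).trans_lt hub)
    have hb : 0 < b := (le_max_left _ _).trans_lt hub
    have hbound : ∀ n ≥ 1, log (c + ∑ k ∈ range n, exp (x (k + 1))) / n ≤
        (log (c + n) + C) / n + b := by
      intro n hn1
      have hn : (0 : ℝ) < n := Nat.cast_pos.2 hn1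
      have hlog := log_add_sum_exp_le (s := range n) (f := fun k => x (k + 1))
        (nonempty_range_iff.2 (by omega)) hc
        (a := C + b * n) (by positivity) fun k hk => by
          have hkn : ((k + 1 : ℕ) : ℝ) ≤ n := Nat.cast_le.2 (mem_range.1 hk)
          nlinarith [hC (k + 1)]
      rw [card_range] at hlog
      rw [div_add' _ _ _ hn.ne', div_le_div_iff_of_pos_right hn]
      linarith
    have hlim : Tendsto (fun n : ℕ => (log (c + n) + C) / n + b) atTop (𝓝 (0 + 0 + b)) := by
      simp_rw [add_div]
      exact ((tendsto_log_add_natCast_div_atTop c).add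
        (tendsto_const_div_atTop_nhds_zero_nat _)).add_const b
    filter_upwards [hlim.eventually (gt_mem_nhds (by simpa using hba)), eventually_ge_atTop 1]
      with n hn hn1
    exact (hbound n hn1).trans_lt hn

end LogSumExp

namespace Parrondo

theorem stmt18_Un_asymptotics {Ω : Type*} [MeasurableSpace Ω]
    (μ : Measure Ω) [IsProbabilityMeasure μ]
    (T : Ω → Ω) (hT : Ergodic T μ)
    (σ : Ω → ℝ) (hσmeas : Measurable σ) (hσpos : ∀ ω, 0 < σ ω)
    (hint : Integrable (fun ω => Real.log (σ ω)) μ)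
    (u : ℝ) (hu : u = ∫ ω, Real.log (σ ω) ∂μ) :
    ∀ᵐ ω ∂μ,
      Tendsto (fun n : ℕ =>
          Real.log (∑ k ∈ Finset.range n, ∏ j ∈ Finset.range (k + 1), σ (T^[j] ω)) / n)
        atTop (𝓝 (max 0 u)) ∧
      Tendsto (fun n : ℕ =>
          Real.log ((1 + ∑ k ∈ Finset.range n, ∏ j ∈ Finset.range (k + 1), σ (T^[j] ω)) /
            ∏ j ∈ Finset.range n, σ (T^[j] ω)) / n)
        atTop (𝓝 (max 0 (-u))) := by
  filter_upwards [hT.ae_tendsto_birkhoffAverage hσmeas.log hint] with ω hω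
  set x : ℕ → ℝ := fun n => birkhoffSum T (fun ω => log (σ ω)) n ω
  have hs : ∀ n, ∏ j ∈ range n, σ (T^[j] ω) = exp (x n) := fun n => by
    simp only [x, birkhoffSum, exp_sum, exp_log (hσpos _)]
  have hx : Tendsto (fun n : ℕ => x n / n) atTop (𝓝 u) := by
    rw [hu]
    refine hω.congr fun n => ?_
    rw [birkhoffAverage, smul_eq_mul, inv_mul_eq_div]
  simp only [hs]
  refine ⟨by simpa using tendsto_log_add_sum_exp_div le_rfl hx, ?_⟩
  have hlim := (tendsto_log_add_sum_exp_div zero_le_one hx).sub hx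
  rw [← max_sub_sub_right, zero_sub, sub_self, max_comm] at hlim
  refine hlim.congr fun n => ?_
  rw [log_div (by positivity) (exp_pos _).ne', log_exp, sub_div]

end Parrondo
end

section
/- The integral ∫_0^1 log((1−x)/x) · 1/(log 2 · (1+x)) dx equals (log 2)/2; equivalently, ∫_0^1 log((1−x)/x)/(1+x) dx = (log 2)²/2. Consequently, if p_0 has the Gauss measure with density f(x) = 1/(log 2 · (1+x)) on (0,1), which is invariant for the Gauss map T(e) = 1/e − ⌊1/e⌋, and σ_0 = (1−p_0)/p_0, then E(log σ_0) = (log 2)/2 > 0. -/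
open MeasureTheory Filter Matrix
open scoped ENNReal Topology

namespace Parrondo

/-! The substitution `x ↦ (1 - x) / (1 + x)` is an involution of `(0, 1)` with Jacobian
`2 / (1 + x) ^ 2`, and it turns `log ((1 - x) / x) / (1 + x)` into
`(log 2 - log ((1 - x) / x)) / (1 + x)`. Hence `I = log 2 * ∫₀¹ dx / (1 + x) - I = (log 2) ^ 2 - I`;
dividing by the normalisation `log 2` of the Gauss density gives `E (log σ₀)`. -/

lemma integral_withDensity_ofReal {X E : Type*} [MeasurableSpace X] [NormedAddCommGroup E]
    [NormedSpace ℝ E] {μ : Measure X} {d : X → ℝ} (hd : Measurable d) (hd0 : ∀ᵐ x ∂μ, 0 ≤ d x)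
    (g : X → E) :
    ∫ x, g x ∂μ.withDensity (fun x => ENNReal.ofReal (d x)) = ∫ x, d x • g x ∂μ := by
  rw [integral_withDensity_eq_integral_toReal_smul (f := fun x => ENNReal.ofReal (d x))
    (by fun_prop) (ae_of_all _ fun _ => ENNReal.ofReal_lt_top)]
  exact integral_congr_ae (hd0.mono fun x hx => by simp only [ENNReal.toReal_ofReal hx])

section GaussIntegral

open Set Real

noncomputable def cayley (x : ℝ) : ℝ := (1 - x) / (1 + x)

lemma cayley_cayley {x : ℝ} (hx : 1 + x ≠ 0) : cayley (cayley x) = x := by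
  unfold cayley
  field_simp
  ring

lemma cayley_mem_Ioo {x : ℝ} (hx : x ∈ Ioo (0 : ℝ) 1) : cayley x ∈ Ioo (0 : ℝ) 1 := by
  obtain ⟨h0, h1⟩ := hx
  exact ⟨div_pos (by linarith) (by linarith), (div_lt_one (by linarith)).2 (by linarith)⟩

lemma bijOn_cayley : BijOn cayley (Ioo (0 : ℝ) 1) (Ioo (0 : ℝ) 1) :=
  have hinv : InvOn cayley cayley (Ioo (0 : ℝ) 1) (Ioo (0 : ℝ) 1) :=
    ⟨fun x hx => cayley_cayley (by linarith [hx.1]),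
      fun x hx => cayley_cayley (by linarith [hx.1])⟩
  hinv.bijOn (fun _ => cayley_mem_Ioo) (fun _ => cayley_mem_Ioo)

lemma hasDerivAt_cayley {x : ℝ} (hx : 1 + x ≠ 0) :
    HasDerivAt cayley (-2 / (1 + x) ^ 2) x := by
  have h : HasDerivAt (fun y => (1 - y) / (1 + y))
      ((-1 * (1 + x) - (1 - x) * 1) / (1 + x) ^ 2) x :=
    ((hasDerivAt_id' x).const_sub 1).div ((hasDerivAt_id' x).const_add 1) hx
  rwa [show (-1 * (1 + x) - (1 - x) * 1) / (1 + x) ^ 2 = -2 / (1 + x) ^ 2 by ring] at h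

lemma integral_Ioo_comp_cayley (f : ℝ → ℝ) :
    ∫ x in Ioo (0 : ℝ) 1, f x = ∫ x in Ioo (0 : ℝ) 1, 2 / (1 + x) ^ 2 * f (cayley x) := by
  have hderiv : ∀ x ∈ Ioo (0 : ℝ) 1,
      HasDerivWithinAt cayley (-2 / (1 + x) ^ 2) (Ioo (0 : ℝ) 1) x :=
    fun x hx => (hasDerivAt_cayley (by linarith [hx.1])).hasDerivWithinAt
  conv_lhs => rw [← bijOn_cayley.image_eq]
  rw [integral_image_eq_integral_abs_deriv_smul measurableSet_Ioo hderiv bijOn_cayley.injOn]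
  refine setIntegral_congr_fun measurableSet_Ioo fun x hx => ?_
  rw [smul_eq_mul, abs_div, abs_neg, abs_two, abs_of_pos (pow_pos (by linarith [hx.1]) 2)]

lemma integrableOn_log_one_sub_div_div_one_add :
    IntegrableOn (fun x => log ((1 - x) / x) / (1 + x)) (Ioo (0 : ℝ) 1) := by
  have hlog : IntervalIntegrable (fun x => (log (1 - x) - log x) * (1 + x)⁻¹) volume 0 1 := by
    refine IntervalIntegrable.mul_continuousOn ?_ ?_
    · refine IntervalIntegrable.sub ?_ intervalIntegral.intervalIntegrable_log'
      simpa using (intervalIntegral.intervalIntegrable_log' (a := 1) (b := 0)).comp_sub_left 1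
    · exact ContinuousOn.inv₀ (by fun_prop) fun x hx => by
        rw [uIcc_of_le zero_le_one] at hx
        linarith [hx.1]
  refine ((intervalIntegrable_iff_integrableOn_Ioo_of_le zero_le_one).1 hlog).congr_fun
    (fun x hx => ?_) measurableSet_Ioo
  rw [log_div (by linarith [hx.2]) hx.1.ne', div_eq_mul_inv]

lemma integral_Ioo_inv_one_add : ∫ x in Ioo (0 : ℝ) 1, (1 + x)⁻¹ = log 2 := by
  rw [← integral_Ioc_eq_integral_Ioo, ← intervalIntegral.integral_of_le zero_le_one]
  simp_rw [add_comm (1 : ℝ)]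
  rw [intervalIntegral.integral_comp_add_right (fun x => x⁻¹), integral_inv (by norm_num)]
  norm_num

lemma jacobian_mul_log_div_comp_cayley {x : ℝ} (hx : x ∈ Ioo (0 : ℝ) 1) :
    2 / (1 + x) ^ 2 * (log ((1 - cayley x) / cayley x) / (1 + cayley x)) =
      log 2 * (1 + x)⁻¹ - log ((1 - x) / x) / (1 + x) := by
  obtain ⟨h0, h1⟩ := hx
  have hratio : (1 - cayley x) / cayley x = 2 * x / (1 - x) := by
    unfold cayley; field_simp; ring
  have hdenom : 1 + cayley x = 2 / (1 + x) := by
    unfold cayley; field_simp; ring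
  rw [hratio, hdenom, log_div (by positivity) (by linarith), log_mul two_ne_zero h0.ne',
    log_div (by linarith) h0.ne']
  field_simp
  ring

lemma integral_log_one_sub_div_div_one_add :
    ∫ x in Ioo (0 : ℝ) 1, log ((1 - x) / x) / (1 + x) = log 2 ^ 2 / 2 := by
  have hinv : IntegrableOn (fun x : ℝ => log 2 * (1 + x)⁻¹) (Ioo 0 1) :=
    (continuousOn_const.mul (ContinuousOn.inv₀ (by fun_prop) fun x hx => by
      linarith [hx.1])).integrableOn_Icc.mono_set Ioo_subset_Icc_self
  have hself := integral_Ioo_comp_cayley fun x => log ((1 - x) / x) / (1 + x)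
  rw [setIntegral_congr_fun measurableSet_Ioo fun x hx => jacobian_mul_log_div_comp_cayley hx,
    integral_sub hinv integrableOn_log_one_sub_div_div_one_add, integral_const_mul,
    integral_Ioo_inv_one_add] at hself
  linarith

lemma integral_log_one_sub_div_mul_gauss_density :
    ∫ x in Ioo (0 : ℝ) 1, log ((1 - x) / x) * (1 / (log 2 * (1 + x))) = log 2 / 2 := by
  have hrw (x : ℝ) : log ((1 - x) / x) * (1 / (log 2 * (1 + x))) =
      (log 2)⁻¹ * (log ((1 - x) / x) / (1 + x)) := by
    rw [one_div, mul_inv]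
    ring
  simp_rw [hrw]
  rw [integral_const_mul, integral_log_one_sub_div_div_one_add]
  field_simp [(log_pos one_lt_two).ne']

end GaussIntegral

theorem stmt19_gauss_integral :
    (∫ x in Set.Ioo (0 : ℝ) 1,
        Real.log ((1 - x) / x) * (1 / (Real.log 2 * (1 + x)))) = Real.log 2 / 2 ∧
    (∫ x in Set.Ioo (0 : ℝ) 1, Real.log ((1 - x) / x) / (1 + x)) = Real.log 2 ^ 2 / 2 ∧
    ∀ ν : Measure ℝ,
      ν = (volume.restrict (Set.Ioo (0 : ℝ) 1)).withDensity
          (fun x => ENNReal.ofReal (1 / (Real.log 2 * (1 + x)))) →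
      (∫ x, Real.log ((1 - x) / x) ∂ν) = Real.log 2 / 2 ∧ 0 < Real.log 2 / 2 := by
  have hlog2 : 0 < Real.log 2 := Real.log_pos one_lt_two
  refine ⟨integral_log_one_sub_div_mul_gauss_density, integral_log_one_sub_div_div_one_add,
    fun ν hν => ⟨?_, half_pos hlog2⟩⟩
  have hdensity_nonneg : ∀ᵐ x ∂volume.restrict (Set.Ioo (0 : ℝ) 1),
      0 ≤ 1 / (Real.log 2 * (1 + x)) :=
    ae_restrict_of_forall_mem measurableSet_Ioo fun x hx =>
      one_div_nonneg.2 (mul_nonneg hlog2.le (by linarith [hx.1]))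
  rw [hν, integral_withDensity_ofReal (by fun_prop) hdensity_nonneg,
    ← integral_log_one_sub_div_mul_gauss_density]
  simp_rw [smul_eq_mul, mul_comm]

end Parrondo
end
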